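/- arXiv:2110.06704 — 9 statements merged into one kernel-verified Lean document; each statement's English description precedes it below -/
import Mathlib

section
/- Let ℓ > 0 and let ξ, η : ℝ → ℝ be smooth ℓ-periodic functions with ξ'(s)² + η'(s)² = 1 for all s, with curvature κ(s) := ξ'(s)η''(s) − η'(s)ξ''(s) satisfying κ(s) > 0 for all s and ∫₀^ℓ κ(s) ds = 2π. Then neither ξ' nor η' is constant, both satisfy ∫₀^ℓ v(s)κ(s) ds = 0, and at least one of the two functions v = ξ' or v = η' satisfies the Rayleigh-quotient bound (1/2)∫₀^ℓ v'(s)² ds ≤ ((1/(4π)) ∫₀^ℓ κ(s)² ds) · ∫₀^ℓ v(s)² κ(s) ds. -/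
open Real intervalIntegral

/-- for a unit-speed closed plane curve with positive curvature and
total curvature `2π`, the components `ξ'`, `η'` of the unit tangent are non-constant
test functions of `κ ds`-mean zero, and at least one of them satisfies the Rayleigh
quotient bound `(1/2)∫ v'² ≤ ((1/(4π)) ∫ κ²) · ∫ v² κ`. -/
theorem tangent_components_rayleigh_bound
    (ℓ : ℝ) (hℓ : 0 < ℓ)
    (ξ η : ℝ → ℝ)
    (hξ : ContDiff ℝ (⊤ : ℕ∞) ξ) (hη : ContDiff ℝ (⊤ : ℕ∞) η)
    (hξper : Function.Periodic ξ ℓ) (hηper : Function.Periodic η ℓ)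
    (hunit : ∀ s : ℝ, (deriv ξ s) ^ 2 + (deriv η s) ^ 2 = 1)
    (κ : ℝ → ℝ)
    (hκ : ∀ s : ℝ, κ s = deriv ξ s * deriv (deriv η) s - deriv η s * deriv (deriv ξ) s)
    (hκpos : ∀ s : ℝ, 0 < κ s)
    (htot : (∫ s in (0:ℝ)..ℓ, κ s) = 2 * π) :
    (¬ ∃ c : ℝ, ∀ s : ℝ, deriv ξ s = c) ∧
    (¬ ∃ c : ℝ, ∀ s : ℝ, deriv η s = c) ∧
    (∫ s in (0:ℝ)..ℓ, deriv ξ s * κ s) = 0 ∧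
    (∫ s in (0:ℝ)..ℓ, deriv η s * κ s) = 0 ∧
    ((1 / 2) * (∫ s in (0:ℝ)..ℓ, (deriv (deriv ξ) s) ^ 2) ≤
        ((1 / (4 * π)) * ∫ s in (0:ℝ)..ℓ, (κ s) ^ 2) *
          (∫ s in (0:ℝ)..ℓ, (deriv ξ s) ^ 2 * κ s) ∨
      (1 / 2) * (∫ s in (0:ℝ)..ℓ, (deriv (deriv η) s) ^ 2) ≤
        ((1 / (4 * π)) * ∫ s in (0:ℝ)..ℓ, (κ s) ^ 2) *
          (∫ s in (0:ℝ)..ℓ, (deriv η s) ^ 2 * κ s)) := by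
  have hπ : (0:ℝ) < π := Real.pi_pos
  have hξ0 : ContDiff ℝ ((⊤:ℕ∞):WithTop ℕ∞) ξ := hξ.of_le (by simp)
  have hη0 : ContDiff ℝ ((⊤:ℕ∞):WithTop ℕ∞) η := hη.of_le (by simp)
  have hξ' : ContDiff ℝ ((⊤:ℕ∞):WithTop ℕ∞) (deriv ξ) := (contDiff_infty_iff_deriv.mp hξ0).2
  have hη' : ContDiff ℝ ((⊤:ℕ∞):WithTop ℕ∞) (deriv η) := (contDiff_infty_iff_deriv.mp hη0).2
  have hξ'd : Differentiable ℝ (deriv ξ) := hξ'.differentiable (by simp)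
  have hη'd : Differentiable ℝ (deriv η) := hη'.differentiable (by simp)
  have hξ''c : Continuous (deriv (deriv ξ)) := ((contDiff_infty_iff_deriv.mp hξ').2).continuous
  have hη''c : Continuous (deriv (deriv η)) := ((contDiff_infty_iff_deriv.mp hη').2).continuous
  have hξ'c : Continuous (deriv ξ) := hξ'.continuous
  have hη'c : Continuous (deriv η) := hη'.continuous
  have hκc : Continuous κ := by
    have h : κ = fun s => deriv ξ s * deriv (deriv η) s - deriv η s * deriv (deriv ξ) s :=
      funext hκ
    rw [h]
    exact (hξ'c.mul hη''c).sub (hη'c.mul hξ''c)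
  -- orthogonality relation from differentiating the unit condition
  have h0 : ∀ s, deriv ξ s * deriv (deriv ξ) s + deriv η s * deriv (deriv η) s = 0 := by
    intro s
    have h1 : HasDerivAt (fun t => deriv ξ t ^ 2 + deriv η t ^ 2)
        (2 * deriv ξ s ^ 1 * deriv (deriv ξ) s + 2 * deriv η s ^ 1 * deriv (deriv η) s) s :=
      (((hξ'd s).hasDerivAt.pow 2).add ((hη'd s).hasDerivAt.pow 2))
    have h2 : (fun t => deriv ξ t ^ 2 + deriv η t ^ 2) = fun _ => (1:ℝ) := funext hunit
    rw [h2] at h1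
    have h3 := (hasDerivAt_const s (1:ℝ)).unique h1
    simp only [pow_one] at h3
    linarith
  have hξ'' : ∀ s, deriv (deriv ξ) s = -(κ s) * deriv η s := by
    intro s
    linear_combination deriv ξ s * h0 s + deriv η s * hκ s
      - deriv (deriv ξ) s * hunit s
  have hη'' : ∀ s, deriv (deriv η) s = κ s * deriv ξ s := by
    intro s
    linear_combination deriv η s * h0 s - deriv ξ s * hκ s
      - deriv (deriv η) s * hunit s
  -- periodicity of derivatives
  have hperd : ∀ (f : ℝ → ℝ), Function.Periodic f ℓ → Function.Periodic (deriv f) ℓ := by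
    intro f hf x
    have h : f = fun y => f (y + ℓ) := funext fun y => (hf y).symm
    conv_rhs => rw [h]
    exact (deriv_comp_add_const f ℓ x).symm
  have hξ'per := hperd ξ hξper
  have hη'per := hperd η hηper
  -- zero integrals via FTC
  have hz : ∀ (f : ℝ → ℝ), Differentiable ℝ f → Continuous (deriv f) →
      Function.Periodic f ℓ → (∫ s in (0:ℝ)..ℓ, deriv f s) = 0 := by
    intro f hfd hfc hfp
    rw [intervalIntegral.integral_deriv_eq_sub (fun x _ => hfd x)
      (hfc.intervalIntegrable 0 ℓ)]
    have : f ℓ = f 0 := by simpa using hfp 0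
    rw [this, sub_self]
  have hzξ : (∫ s in (0:ℝ)..ℓ, deriv ξ s * κ s) = 0 := by
    have h : (∫ s in (0:ℝ)..ℓ, deriv ξ s * κ s)
        = ∫ s in (0:ℝ)..ℓ, deriv (deriv η) s := by
      apply intervalIntegral.integral_congr
      intro s _
      show deriv ξ s * κ s = deriv (deriv η) s
      rw [hη'' s]; ring
    rw [h]
    exact hz (deriv η) hη'd hη''c hη'per
  have hzη : (∫ s in (0:ℝ)..ℓ, deriv η s * κ s) = 0 := by
    have h : (∫ s in (0:ℝ)..ℓ, deriv η s * κ s)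
        = ∫ s in (0:ℝ)..ℓ, -deriv (deriv ξ) s := by
      apply intervalIntegral.integral_congr
      intro s _
      show deriv η s * κ s = -deriv (deriv ξ) s
      rw [hξ'' s]; ring
    rw [h, intervalIntegral.integral_neg, hz (deriv ξ) hξ'd hξ''c hξ'per, neg_zero]
  -- non-constancy
  have hnc1 : ¬ ∃ c : ℝ, ∀ s : ℝ, deriv ξ s = c := by
    rintro ⟨c, hc⟩
    have h1 : deriv ξ = fun _ => c := funext hc
    have h2 : ∀ s, deriv (deriv ξ) s = 0 := by rw [h1]; simp
    have h3 : ∀ s, deriv η s = 0 := by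
      intro s
      have h4 := hξ'' s
      rw [h2 s] at h4
      have := hκpos s
      nlinarith
    have h5 : ∀ s, deriv (deriv η) s = 0 := by
      have : deriv η = fun _ => 0 := funext h3
      rw [this]; simp
    have h6 := hη'' 0
    rw [h5 0] at h6
    have h7 := hunit 0
    rw [h3 0] at h7
    have hκ0 := hκpos 0
    have h8 : deriv ξ 0 = 0 := by
      rcases mul_eq_zero.mp h6.symm with h | h
      · exact absurd h (ne_of_gt hκ0)
      · exact h
    rw [h8] at h7
    norm_num at h7
  have hnc2 : ¬ ∃ c : ℝ, ∀ s : ℝ, deriv η s = c := by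
    rintro ⟨c, hc⟩
    have h1 : deriv η = fun _ => c := funext hc
    have h2 : ∀ s, deriv (deriv η) s = 0 := by rw [h1]; simp
    have h3 : ∀ s, deriv ξ s = 0 := by
      intro s
      have h4 := hη'' s
      rw [h2 s] at h4
      have := hκpos s
      nlinarith
    have h5 : ∀ s, deriv (deriv ξ) s = 0 := by
      have : deriv ξ = fun _ => 0 := funext h3
      rw [this]; simp
    have h6 := hξ'' 0
    rw [h5 0] at h6
    have h7 := hunit 0
    rw [h3 0] at h7
    have hκ0 := hκpos 0
    have h8 : deriv η 0 = 0 := by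
      rcases mul_eq_zero.mp h6.symm with h | h
      · rw [neg_eq_zero] at h
        exact absurd h (ne_of_gt hκ0)
      · exact h
    rw [h8] at h7
    norm_num at h7
  refine ⟨hnc1, hnc2, hzξ, hzη, ?_⟩
  -- Rayleigh bound
  set A := ∫ s in (0:ℝ)..ℓ, (κ s)^2 * (deriv ξ s)^2 with hA
  set B := ∫ s in (0:ℝ)..ℓ, (κ s)^2 * (deriv η s)^2 with hB
  set a := ∫ s in (0:ℝ)..ℓ, (deriv ξ s)^2 * κ s with ha
  set b := ∫ s in (0:ℝ)..ℓ, (deriv η s)^2 * κ s with hb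
  have hiA : IntervalIntegrable (fun s => (κ s)^2 * (deriv ξ s)^2) MeasureTheory.volume 0 ℓ :=
    ((hκc.pow 2).mul (hξ'c.pow 2)).intervalIntegrable 0 ℓ
  have hiB : IntervalIntegrable (fun s => (κ s)^2 * (deriv η s)^2) MeasureTheory.volume 0 ℓ :=
    ((hκc.pow 2).mul (hη'c.pow 2)).intervalIntegrable 0 ℓ
  have hia : IntervalIntegrable (fun s => (deriv ξ s)^2 * κ s) MeasureTheory.volume 0 ℓ :=
    ((hξ'c.pow 2).mul hκc).intervalIntegrable 0 ℓ
  have hib : IntervalIntegrable (fun s => (deriv η s)^2 * κ s) MeasureTheory.volume 0 ℓ :=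
    ((hη'c.pow 2).mul hκc).intervalIntegrable 0 ℓ
  have hAB : A + B = ∫ s in (0:ℝ)..ℓ, (κ s)^2 := by
    rw [hA, hB, ← intervalIntegral.integral_add hiA hiB]
    apply intervalIntegral.integral_congr
    intro s _
    show (κ s)^2 * deriv ξ s ^2 + (κ s)^2 * deriv η s ^2 = (κ s)^2
    linear_combination (κ s)^2 * hunit s
  have hab : a + b = 2 * π := by
    rw [ha, hb, ← intervalIntegral.integral_add hia hib, ← htot]
    apply intervalIntegral.integral_congr
    intro s _
    show deriv ξ s ^2 * κ s + deriv η s ^2 * κ s = κ s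
    linear_combination κ s * hunit s
  have hIξ : (∫ s in (0:ℝ)..ℓ, (deriv (deriv ξ) s)^2) = B := by
    rw [hB]
    apply intervalIntegral.integral_congr
    intro s _
    show deriv (deriv ξ) s ^2 = (κ s)^2 * deriv η s ^2
    rw [hξ'' s]; ring
  have hIη : (∫ s in (0:ℝ)..ℓ, (deriv (deriv η) s)^2) = A := by
    rw [hA]
    apply intervalIntegral.integral_congr
    intro s _
    show deriv (deriv η) s ^2 = (κ s)^2 * deriv ξ s ^2
    rw [hη'' s]; ring
  by_contra hcon
  push_neg at hcon
  obtain ⟨h1, h2⟩ := hcon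
  rw [hIξ, ← hAB] at h1
  rw [hIη, ← hAB] at h2
  have h3 : 1 / (4 * π) * (A + B) * a + 1 / (4 * π) * (A + B) * b
      < 1 / 2 * B + 1 / 2 * A := by linarith
  have h4 : 1 / (4 * π) * (A + B) * a + 1 / (4 * π) * (A + B) * b
      = 1 / (4 * π) * (A + B) * (a + b) := by ring
  rw [h4, hab] at h3
  have h5 : 1 / (4 * π) * (A + B) * (2 * π) = 1 / 2 * B + 1 / 2 * A := by
    field_simp
    ring
  rw [h5] at h3
  exact lt_irrefl _ h3
end

section
/- Let ℓ > 0 and let ξ, η : ℝ → ℝ be smooth ℓ-periodic functions with ξ'(s)² + η'(s)² = 1 for all s, with curvature κ(s) := ξ'(s)η''(s) − η'(s)ξ''(s) satisfying κ(s) > 0 for all s and ∫₀^ℓ κ(s) ds = 2π. Suppose λ ∈ ℝ is such that for every smooth ℓ-periodic function v : ℝ → ℝ with ∫₀^ℓ v(s)κ(s) ds = 0 one has λ ∫₀^ℓ v(s)² κ(s) ds ≤ (1/2) ∫₀^ℓ v'(s)² ds. Then λ ≤ (1/(4π)) ∫₀^ℓ κ(s)² ds. -/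
open Real intervalIntegral

/-- upper bound for the first positive eigenvalue of
`B = −(2κ)⁻¹ d²/ds²` on `L²(ℝ/ℓℤ, κ ds)`: any `λ` which is a lower bound for the
Rayleigh quotients on the `κ ds`-mean-zero subspace satisfies
`λ ≤ (1/(4π)) ∫ κ²`. -/
theorem eigenvalue_upper_bound
    (ℓ : ℝ) (hℓ : 0 < ℓ)
    (ξ η : ℝ → ℝ)
    (hξ : ContDiff ℝ (⊤ : ℕ∞) ξ) (hη : ContDiff ℝ (⊤ : ℕ∞) η)
    (hξper : Function.Periodic ξ ℓ) (hηper : Function.Periodic η ℓ)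
    (hunit : ∀ s : ℝ, (deriv ξ s) ^ 2 + (deriv η s) ^ 2 = 1)
    (κ : ℝ → ℝ)
    (hκ : ∀ s : ℝ, κ s = deriv ξ s * deriv (deriv η) s - deriv η s * deriv (deriv ξ) s)
    (hκpos : ∀ s : ℝ, 0 < κ s)
    (htot : (∫ s in (0:ℝ)..ℓ, κ s) = 2 * π)
    (lam : ℝ)
    (hlam : ∀ v : ℝ → ℝ, ContDiff ℝ (⊤ : ℕ∞) v → Function.Periodic v ℓ →
      (∫ s in (0:ℝ)..ℓ, v s * κ s) = 0 →
      lam * (∫ s in (0:ℝ)..ℓ, (v s) ^ 2 * κ s) ≤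
        (1 / 2) * ∫ s in (0:ℝ)..ℓ, (deriv v s) ^ 2) :
    lam ≤ (1 / (4 * π)) * ∫ s in (0:ℝ)..ℓ, (κ s) ^ 2 := by

  have hd : ∀ f : ℝ → ℝ, ContDiff ℝ (⊤ : ℕ∞) f → ContDiff ℝ (⊤ : ℕ∞) (deriv f) := fun f hf =>
    (contDiff_infty_iff_deriv.mp hf).2
  have hperd : ∀ f : ℝ → ℝ, Function.Periodic f ℓ → Function.Periodic (deriv f) ℓ := by
    intro f hf x
    rw [← deriv_comp_add_const, hf.funext]
  have hξ1 : ContDiff ℝ (⊤ : ℕ∞) (deriv ξ) := hd ξ hξ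
  have hη1 : ContDiff ℝ (⊤ : ℕ∞) (deriv η) := hd η hη
  have hξ2 : ContDiff ℝ (⊤ : ℕ∞) (deriv (deriv ξ)) := hd _ hξ1
  have hη2 : ContDiff ℝ (⊤ : ℕ∞) (deriv (deriv η)) := hd _ hη1
  have hκc : Continuous κ := by
    have hfe : κ = fun s => deriv ξ s * deriv (deriv η) s - deriv η s * deriv (deriv ξ) s :=
      funext hκ
    rw [hfe]
    exact (hξ1.continuous.mul hη2.continuous).sub (hη1.continuous.mul hξ2.continuous)
  -- orthogonality: ξ'ξ'' + η'η'' = 0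
  have horth : ∀ s, deriv ξ s * deriv (deriv ξ) s + deriv η s * deriv (deriv η) s = 0 := by
    intro s
    have d1 : HasDerivAt (deriv ξ) (deriv (deriv ξ) s) s :=
      (hξ1.differentiable (by simp) s).hasDerivAt
    have d2 : HasDerivAt (deriv η) (deriv (deriv η) s) s :=
      (hη1.differentiable (by simp) s).hasDerivAt
    have hsum : HasDerivAt (fun t => (deriv ξ t) ^ 2 + (deriv η t) ^ 2)
        (2 * deriv ξ s ^ 1 * deriv (deriv ξ) s + 2 * deriv η s ^ 1 * deriv (deriv η) s) s :=
      (d1.pow 2).add (d2.pow 2)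
    have hfe : (fun t => (deriv ξ t) ^ 2 + (deriv η t) ^ 2) = fun _ => (1 : ℝ) :=
      funext hunit
    rw [hfe] at hsum
    have h0 := hsum.unique (hasDerivAt_const s (1 : ℝ))
    nlinarith [h0]
  have hη'' : ∀ s, deriv (deriv η) s = κ s * deriv ξ s := by
    intro s
    rw [hκ s]
    linear_combination deriv η s * horth s - deriv (deriv η) s * hunit s
  have hξ'' : ∀ s, deriv (deriv ξ) s = -(κ s * deriv η s) := by
    intro s
    rw [hκ s]
    linear_combination deriv ξ s * horth s - deriv (deriv ξ) s * hunit s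
  -- mean-zero of ξ' and η' w.r.t. κ ds
  have hmean1 : (∫ s in (0:ℝ)..ℓ, deriv ξ s * κ s) = 0 := by
    have hcg : ∀ s ∈ Set.uIcc (0:ℝ) ℓ, deriv ξ s * κ s = deriv (deriv η) s := by
      intro s _; rw [hη'' s]; ring
    rw [intervalIntegral.integral_congr hcg,
      intervalIntegral.integral_deriv_eq_sub
        (fun x _ => hη1.differentiable (by simp) x)
        (hη2.continuous.intervalIntegrable _ _)]
    have := hperd η hηper 0
    simp only [zero_add] at this
    rw [this]; ring
  have hmean2 : (∫ s in (0:ℝ)..ℓ, deriv η s * κ s) = 0 := by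
    have hcg : ∀ s ∈ Set.uIcc (0:ℝ) ℓ, deriv η s * κ s = -deriv (deriv ξ) s := by
      intro s _; rw [hξ'' s]; ring
    rw [intervalIntegral.integral_congr hcg, intervalIntegral.integral_neg,
      intervalIntegral.integral_deriv_eq_sub
        (fun x _ => hξ1.differentiable (by simp) x)
        (hξ2.continuous.intervalIntegrable _ _)]
    have := hperd ξ hξper 0
    simp only [zero_add] at this
    rw [this]; ring
  -- apply the Rayleigh hypothesis to ξ' and η'
  have h1 := hlam (deriv ξ) hξ1 (hperd ξ hξper) hmean1
  have h2 := hlam (deriv η) hη1 (hperd η hηper) hmean2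
  -- rewrite right-hand sides
  have hr1 : (∫ s in (0:ℝ)..ℓ, (deriv (deriv ξ) s) ^ 2)
      = ∫ s in (0:ℝ)..ℓ, (κ s) ^ 2 * (deriv η s) ^ 2 := by
    apply intervalIntegral.integral_congr
    intro s _
    show deriv (deriv ξ) s ^ 2 = κ s ^ 2 * deriv η s ^ 2
    rw [hξ'' s]; ring
  have hr2 : (∫ s in (0:ℝ)..ℓ, (deriv (deriv η) s) ^ 2)
      = ∫ s in (0:ℝ)..ℓ, (κ s) ^ 2 * (deriv ξ s) ^ 2 := by
    apply intervalIntegral.integral_congr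
    intro s _
    show deriv (deriv η) s ^ 2 = κ s ^ 2 * deriv ξ s ^ 2
    rw [hη'' s]; ring
  rw [hr1] at h1
  rw [hr2] at h2
  -- sum the left-hand integrals
  have hintA1 : IntervalIntegrable (fun s => (deriv ξ s) ^ 2 * κ s) MeasureTheory.volume 0 ℓ :=
    ((hξ1.continuous.pow 2).mul hκc).intervalIntegrable _ _
  have hintA2 : IntervalIntegrable (fun s => (deriv η s) ^ 2 * κ s) MeasureTheory.volume 0 ℓ :=
    ((hη1.continuous.pow 2).mul hκc).intervalIntegrable _ _
  have hA : (∫ s in (0:ℝ)..ℓ, (deriv ξ s) ^ 2 * κ s)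
      + (∫ s in (0:ℝ)..ℓ, (deriv η s) ^ 2 * κ s) = 2 * π := by
    rw [← intervalIntegral.integral_add hintA1 hintA2, ← htot]
    apply intervalIntegral.integral_congr
    intro s _
    show deriv ξ s ^ 2 * κ s + deriv η s ^ 2 * κ s = κ s
    linear_combination κ s * hunit s
  have hintB1 : IntervalIntegrable (fun s => (κ s) ^ 2 * (deriv η s) ^ 2)
      MeasureTheory.volume 0 ℓ :=
    ((hκc.pow 2).mul (hη1.continuous.pow 2)).intervalIntegrable _ _
  have hintB2 : IntervalIntegrable (fun s => (κ s) ^ 2 * (deriv ξ s) ^ 2)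
      MeasureTheory.volume 0 ℓ :=
    ((hκc.pow 2).mul (hξ1.continuous.pow 2)).intervalIntegrable _ _
  have hB : (∫ s in (0:ℝ)..ℓ, (κ s) ^ 2 * (deriv η s) ^ 2)
      + (∫ s in (0:ℝ)..ℓ, (κ s) ^ 2 * (deriv ξ s) ^ 2)
      = ∫ s in (0:ℝ)..ℓ, (κ s) ^ 2 := by
    rw [← intervalIntegral.integral_add hintB1 hintB2]
    apply intervalIntegral.integral_congr
    intro s _
    show κ s ^ 2 * deriv η s ^ 2 + κ s ^ 2 * deriv ξ s ^ 2 = κ s ^ 2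
    linear_combination κ s ^ 2 * hunit s
  have hkey : lam * (2 * π) ≤ (1 / 2) * ∫ s in (0:ℝ)..ℓ, (κ s) ^ 2 := by
    calc lam * (2 * π)
        = lam * (∫ s in (0:ℝ)..ℓ, (deriv ξ s) ^ 2 * κ s)
          + lam * (∫ s in (0:ℝ)..ℓ, (deriv η s) ^ 2 * κ s) := by rw [← hA]; ring
      _ ≤ (1 / 2) * (∫ s in (0:ℝ)..ℓ, (κ s) ^ 2 * (deriv η s) ^ 2)
          + (1 / 2) * (∫ s in (0:ℝ)..ℓ, (κ s) ^ 2 * (deriv ξ s) ^ 2) := add_le_add h1 h2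
      _ = (1 / 2) * ∫ s in (0:ℝ)..ℓ, (κ s) ^ 2 := by rw [← hB]; ring
  have hπ : (0:ℝ) < π := Real.pi_pos
  rw [show (1 / (4 * π)) * (∫ s in (0:ℝ)..ℓ, (κ s) ^ 2)
      = (∫ s in (0:ℝ)..ℓ, (κ s) ^ 2) / (4 * π) by ring,
    le_div_iff₀ (by positivity)]
  nlinarith [hkey]
end

section
/- Let κ : ℝ → ℝ be a smooth function with κ(s) > 0 for all s, let p, q : ℝ → ℝ be smooth functions with p(s)² + q(s)² = 1, p'(s) = κ(s)q(s) and q'(s) = −κ(s)p(s) for all s, and let λ ∈ ℝ. If p''(s) + 2λκ(s)p(s) = 0 and q''(s) + 2λκ(s)q(s) = 0 for all s, then κ(s) = 2λ for all s (in particular κ is constant). -/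
/-- rigidity in the eigenvalue estimate: if both components `p`, `q`
of the unit tangent (satisfying the Frenet relations) are eigenfunctions of
`B = −(2κ)⁻¹ d²/ds²` with the same eigenvalue `λ`, then `κ ≡ 2λ` is constant. -/
theorem equality_case_curvature_constant
    (κ p q : ℝ → ℝ)
    (hκ : ContDiff ℝ (⊤ : ℕ∞) κ) (hp : ContDiff ℝ (⊤ : ℕ∞) p) (hq : ContDiff ℝ (⊤ : ℕ∞) q)
    (hκpos : ∀ s : ℝ, 0 < κ s)
    (hunit : ∀ s : ℝ, (p s) ^ 2 + (q s) ^ 2 = 1)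
    (hfrenet₁ : ∀ s : ℝ, deriv p s = κ s * q s)
    (hfrenet₂ : ∀ s : ℝ, deriv q s = -(κ s * p s))
    (lam : ℝ)
    (heigp : ∀ s : ℝ, deriv (deriv p) s + 2 * lam * κ s * p s = 0)
    (heigq : ∀ s : ℝ, deriv (deriv q) s + 2 * lam * κ s * q s = 0) :
    ∀ s : ℝ, κ s = 2 * lam := by
  intro s
  have hκd : Differentiable ℝ κ := hκ.differentiable (by simp)
  have hpd : Differentiable ℝ p := hp.differentiable (by simp)
  have hqd : Differentiable ℝ q := hq.differentiable (by simp)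
  -- compute second derivatives
  have hdp : deriv p = fun t => κ t * q t := funext hfrenet₁
  have hdq : deriv q = fun t => -(κ t * p t) := funext hfrenet₂
  have hpp : deriv (deriv p) s = deriv κ s * q s + κ s * (-(κ s * p s)) := by
    rw [hdp, deriv_fun_mul (hκd s) (hqd s), hfrenet₂]
  have hqq : deriv (deriv q) s = -(deriv κ s * p s + κ s * (κ s * q s)) := by
    rw [hdq]
    rw [deriv.fun_neg (f := fun t => κ t * p t), deriv_fun_mul (hκd s) (hpd s), hfrenet₁]
  have h1 := heigp s
  have h2 := heigq s
  rw [hpp] at h1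
  rw [hqq] at h2
  -- κ' q = (κ² - 2λκ) p  and  κ' p = (2λκ - κ²) q
  have key : (κ s ^ 2 - 2 * lam * κ s) * ((p s) ^ 2 + (q s) ^ 2) = 0 := by
    linear_combination (-p s) * h1 - q s * h2
  rw [hunit s, mul_one] at key
  have := hκpos s
  have : κ s - 2 * lam = 0 := by
    have h3 : κ s * (κ s - 2 * lam) = 0 := by ring_nf; nlinarith [key]
    rcases mul_eq_zero.mp h3 with h | h
    · linarith
    · exact h
  linarith
end

section
/- Let N ≥ 1 and let A be the real N×N tridiagonal matrix with diagonal entries δ₁, …, δ_N, superdiagonal entries μ₁, …, μ_{N−1}, and subdiagonal entries ν₁, …, ν_{N−1} (all other entries zero). Assume (1) δ_k > 0 for every k, and (2) μ_k·ν_k ≤ 0 for every k. Let 0 < δ ≤ (π/2)·(∑_{k=1}^N δ_k^{−1})^{−1} and μ := min_k δ_k. Then A has no (complex) eigenvalue in the open region T := { z ∈ ℂ : Re(z) < μ and |Im(z)| < δ·(1 − μ^{−1}·Re(z)) }. -/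
open Real

section Aux
open Real

private lemma tamgm (a p q X Y : ℝ) (ha : 0 ≤ a) (hX : 0 ≤ X) (hY : 0 ≤ Y)
    (hp : 0 ≤ p) (hq : 0 ≤ q) (h : a ^ 2 ≤ p * q) :
    a * (X * Y) ≤ (p * X ^ 2 + q * Y ^ 2) / 2 := by
  have hsp := Real.sqrt_nonneg p
  have hsq := Real.sqrt_nonneg q
  have hp2 := Real.sq_sqrt hp
  have hq2 := Real.sq_sqrt hq
  have hle : a ≤ Real.sqrt p * Real.sqrt q := by
    have h2 : Real.sqrt (a ^ 2) ≤ Real.sqrt (p * q) := Real.sqrt_le_sqrt h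
    rwa [Real.sqrt_sq ha, Real.sqrt_mul hp q] at h2
  nlinarith [sq_nonneg (Real.sqrt p * X - Real.sqrt q * Y), mul_nonneg hX hY]

noncomputable def tcoef (e M V : ℝ) : ℝ :=
  if M = 0 then e ^ 2 / ((V ^ 2 + 1) * (e + 1))
  else if V = 0 then (M ^ 2 + 1) * (e + 1) / e ^ 2
  else -M / V

lemma tcoef_pos (e M V : ℝ) (he : 0 < e) (h : M * V ≤ 0) : 0 < tcoef e M V := by
  unfold tcoef
  split_ifs with h1 h2
  · positivity
  · positivity
  · have hlt : M * V < 0 := lt_of_le_of_ne h (by simp [mul_eq_zero, h1, h2])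
    rw [div_pos_iff]
    rcases lt_trichotomy V 0 with hv | hv | hv
    · right; constructor <;> nlinarith
    · exact absurd hv h2
    · left; constructor <;> nlinarith

lemma tkey (e M V wk X Y r : ℝ) (he : 0 < e) (hw : 0 < wk) (hMV : M * V ≤ 0)
    (hX : 0 ≤ X) (hY : 0 ≤ Y) (hr : |r| ≤ X * Y) :
    -(e / 2 * (wk * X ^ 2 + wk * tcoef e M V * Y ^ 2)) ≤
      (wk * M + wk * tcoef e M V * V) * r := by
  have hc : 0 < tcoef e M V := tcoef_pos e M V he hMV
  set w1 := wk * tcoef e M V with hw1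
  have hw1p : 0 < w1 := by positivity
  have hsq : |wk * M + w1 * V| ^ 2 ≤ (e * wk) * (e * w1) := by
    unfold tcoef at hw1
    rw [sq_abs]
    split_ifs at hw1 with h1 h2
    · -- M = 0
      subst h1
      rw [hw1, mul_zero, zero_add]
      have hdd : (0:ℝ) < (V ^ 2 + 1) * (e + 1) := by positivity
      rw [show wk * (e ^ 2 / ((V ^ 2 + 1) * (e + 1))) * V
            = wk * e ^ 2 * V / ((V ^ 2 + 1) * (e + 1)) by ring,
          div_pow,
          show e * wk * (e * (wk * (e ^ 2 / ((V ^ 2 + 1) * (e + 1)))))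
            = e ^ 4 * wk ^ 2 / ((V ^ 2 + 1) * (e + 1)) by ring,
          div_le_div_iff₀ (by positivity) hdd]
      have hkey : V ^ 2 ≤ (V ^ 2 + 1) * (e + 1) := by nlinarith [sq_nonneg V]
      have hnn : (0:ℝ) ≤ e ^ 4 * wk ^ 2 * ((V ^ 2 + 1) * (e + 1)) := by positivity
      nlinarith [mul_le_mul_of_nonneg_left hkey hnn]
    · -- V = 0
      subst h2
      rw [hw1]
      rw [mul_zero, add_zero]
      rw [show e * wk * (e * (wk * ((M ^ 2 + 1) * (e + 1) / e ^ 2)))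
            = wk ^ 2 * ((M ^ 2 + 1) * (e + 1)) * (e ^ 2 / e ^ 2) by ring,
          div_self (by positivity), mul_one]
      nlinarith [mul_nonneg (mul_pos hw hw).le
        (by positivity : (0:ℝ) ≤ M ^ 2 * e + e + 1)]
    · -- both nonzero
      have hV : V ≠ 0 := h2
      have : wk * M + w1 * V = 0 := by
        rw [hw1]; field_simp; ring
      rw [this]
      have h0 : (0:ℝ) < e * wk * (e * w1) := by
        exact mul_pos (mul_pos he hw) (mul_pos he hw1p)
      nlinarith
  have habs : |(wk * M + w1 * V) * r| ≤ e / 2 * (wk * X ^ 2 + w1 * Y ^ 2) := by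
    rw [abs_mul]
    calc |wk * M + w1 * V| * |r| ≤ |wk * M + w1 * V| * (X * Y) :=
          mul_le_mul_of_nonneg_left hr (abs_nonneg _)
      _ ≤ ((e * wk) * X ^ 2 + (e * w1) * Y ^ 2) / 2 :=
          tamgm _ _ _ _ _ (abs_nonneg _) hX hY (by positivity) (by positivity) hsq
      _ = e / 2 * (wk * X ^ 2 + w1 * Y ^ 2) := by ring
  have := neg_abs_le ((wk * M + w1 * V) * r)
  linarith

def tW (c : ℕ → ℝ) : ℕ → ℝ
  | 0 => 1
  | n + 1 => tW c n * c n

lemma tW_pos (c : ℕ → ℝ) (hc : ∀ n, 0 < c n) : ∀ n, 0 < tW c n := by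
  intro n
  induction n with
  | zero => exact one_pos
  | succ k ih => exact mul_pos ih (hc k)

end Aux

open ComplexConjugate in
/-- sectorial eigenvalue-exclusion lemma for real tridiagonal
matrices with positive diagonal and non-positive products of off-diagonal
entries. -/
theorem tridiagonal_eigenvalue_exclusion
    (N : ℕ) (hN : 1 ≤ N)
    (δ μ ν : Fin N → ℝ)
    (A : Matrix (Fin N) (Fin N) ℝ)
    (hA : ∀ i j : Fin N, A i j =
      if i = j then δ i
      else if (i : ℕ) + 1 = (j : ℕ) then μ i
      else if (j : ℕ) + 1 = (i : ℕ) then ν j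
      else 0)
    (hδ : ∀ k : Fin N, 0 < δ k)
    (hμν : ∀ k : Fin N, (k : ℕ) + 1 < N → μ k * ν k ≤ 0)
    (d : ℝ) (hd : 0 < d) (hd' : d ≤ (π / 2) * (∑ k : Fin N, (δ k)⁻¹)⁻¹)
    (z : ℂ)
    (hz : ∃ v : Fin N → ℂ, v ≠ 0 ∧ (A.map (Complex.ofReal)).mulVec v = z • v) :
    ¬ (z.re < (⨅ k : Fin N, δ k) ∧
        |z.im| < d * (1 - (⨅ k : Fin N, δ k)⁻¹ * z.re)) := by
  rintro ⟨hlt, -⟩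
  obtain ⟨v, hv0, hv⟩ := hz
  set m := ⨅ k : Fin N, δ k with hm
  obtain ⟨N', rfl⟩ : ∃ N', N = N' + 1 := ⟨N - 1, (Nat.succ_pred_eq_of_pos hN).symm⟩
  set e := (m - z.re) / 2 with he
  have hepos : 0 < e := by rw [he]; linarith
  -- ℕ-indexed (junk-extended) versions of all data
  set V : ℕ → ℂ := fun n => if h : n < N' + 1 then v ⟨n, h⟩ else 0 with hVdef
  set D : ℕ → ℝ := fun n => if h : n < N' + 1 then δ ⟨n, h⟩ else 1 with hDdef
  set Mu : ℕ → ℝ := fun n =>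
    if h : n + 1 < N' + 1 then μ ⟨n, Nat.lt_of_succ_lt h⟩ else 0 with hMudef
  set Nu : ℕ → ℝ := fun n =>
    if h : n + 1 < N' + 1 then ν ⟨n, Nat.lt_of_succ_lt h⟩ else 0 with hNudef
  have hMVle : ∀ n, Mu n * Nu n ≤ 0 := by
    intro n
    by_cases h : n + 1 < N' + 1
    · simp only [hMudef, hNudef, dif_pos h]
      exact hμν ⟨n, Nat.lt_of_succ_lt h⟩ h
    · simp only [hMudef, hNudef, dif_neg h, zero_mul]; exact le_refl 0
  set c : ℕ → ℝ := fun n => tcoef e (Mu n) (Nu n) with hcdef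
  have hcpos : ∀ n, 0 < c n := fun n => tcoef_pos e (Mu n) (Nu n) hepos (hMVle n)
  set W : ℕ → ℝ := tW c with hWdef
  have hWpos : ∀ n, 0 < W n := tW_pos c hcpos
  have hWsucc : ∀ n, W (n + 1) = W n * c n := fun n => rfl
  -- the row equations
  have RL : ∀ n (hn : n < N' + 1),
      (D n : ℂ) * V n + (Mu n : ℂ) * V (n + 1) +
        (if n = 0 then 0 else (Nu (n - 1) : ℂ) * V (n - 1)) = z * V n := by
    intro n hn
    have h1 := congrFun hv ⟨n, hn⟩
    simp only [Matrix.mulVec, dotProduct, Matrix.map_apply, Pi.smul_apply,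
      smul_eq_mul] at h1
    have hVn : V n = v ⟨n, hn⟩ := by simp only [hVdef]; rw [dif_pos hn]
    rw [hVn, ← h1]
    set F : ℕ → ℂ := fun j =>
      (if j = n then (D n : ℂ) * V n else 0) +
      ((if j = n + 1 then (Mu n : ℂ) * V (n + 1) else 0) +
       (if j + 1 = n then (Nu j : ℂ) * V j else 0)) with hFdef
    have hpt : ∀ j : Fin (N' + 1), (↑(A ⟨n, hn⟩ j) : ℂ) * v j = F (j : ℕ) := by
      rintro ⟨jv, hj⟩
      rw [hA]
      simp only [hFdef, Fin.mk.injEq]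
      by_cases e1 : n = jv
      · subst e1
        simp [hDdef, hVdef, hn, show n ≤ N' by omega, show ¬ n = n + 1 by omega, show ¬ n + 1 = n by omega]
      · by_cases e2 : n + 1 = jv
        · subst e2
          simp [hMudef, hVdef, e1, show ¬ (n + 1) + 1 = n by omega,
            show ¬ n + 1 = n + 1 + 1 by omega, show n + 1 < N' + 1 from hj,
            show n < N' by omega]
        · by_cases e3 : jv + 1 = n
          · simp [hNudef, hVdef, e1, e2, e3, show ¬ jv = n by omega,
              show ¬ jv = n + 1 by omega, show jv < N' + 1 from hj, show jv < N' by omega, show ¬ N' < jv by omega]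
          · simp [e1, e2, e3, show ¬ jv = n by omega, show ¬ jv = n + 1 by omega]
    have hS3 : (∑ x ∈ Finset.range (N' + 1), if x + 1 = n then (Nu x : ℂ) * V x else 0)
        = (if n = 0 then 0 else (Nu (n - 1) : ℂ) * V (n - 1)) := by
      by_cases h0 : n = 0
      · subst h0
        rw [if_pos rfl]
        exact Finset.sum_eq_zero fun j _ => if_neg (by omega)
      · obtain ⟨nm, rfl⟩ := Nat.exists_eq_succ_of_ne_zero h0
        rw [if_neg h0]
        simp only [Nat.succ_eq_add_one, add_left_inj]
        rw [Finset.sum_ite_eq' (Finset.range (N' + 1)) nm (fun j => (Nu j : ℂ) * V j),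
          if_pos (Finset.mem_range.mpr (by omega))]
        simp
    rw [Finset.sum_congr rfl (fun j _ => hpt j), Fin.sum_univ_eq_sum_range F (N' + 1)]
    simp only [hFdef]
    rw [Finset.sum_add_distrib, Finset.sum_add_distrib,
      Finset.sum_ite_eq' (Finset.range (N' + 1)) n (fun _ => (D n : ℂ) * V n),
      if_pos (Finset.mem_range.mpr hn),
      Finset.sum_ite_eq' (Finset.range (N' + 1)) (n + 1) (fun _ => (Mu n : ℂ) * V (n + 1))]
    have hS2 : (if n + 1 ∈ Finset.range (N' + 1) then (Mu n : ℂ) * V (n + 1) else 0)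
        = (Mu n : ℂ) * V (n + 1) := by
      by_cases h2 : n + 1 < N' + 1
      · rw [if_pos (Finset.mem_range.mpr h2)]
      · rw [if_neg (by simpa using h2)]
        have : Mu n = 0 := by simp only [hMudef]; rw [dif_neg h2]
        rw [this]; simp
    rw [hS2, hS3, hVn]
    ring
  -- real quantities
  set P : ℕ → ℝ := fun n => Complex.normSq (V n) with hPdef
  set R : ℕ → ℝ := fun n => (conj (V n) * V (n + 1)).re with hRdef
  have hPnn : ∀ n, 0 ≤ P n := fun n => Complex.normSq_nonneg _
  -- per-row real identity
  have key : ∀ n, n < N' + 1 →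
      W n * D n * P n + W n * Mu n * R n +
        (if n = 0 then 0 else W n * Nu (n - 1) * R (n - 1)) = z.re * (W n * P n) := by
    intro n hn
    by_cases h0 : n = 0
    · subst h0
      have h := RL 0 hn
      rw [if_pos rfl, add_zero] at h
      have h2 := congrArg (fun t : ℂ => W 0 * ((starRingEnd ℂ) (V 0) * t).re) h
      rw [if_pos rfl, add_zero]
      simp only [mul_add, Complex.add_re, Complex.mul_re, Complex.mul_im, Complex.conj_re,
        Complex.conj_im, Complex.ofReal_re, Complex.ofReal_im, hPdef, hRdef,
        Complex.normSq_apply] at h2 ⊢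
      linear_combination h2
    · obtain ⟨nm, rfl⟩ := Nat.exists_eq_succ_of_ne_zero h0
      have h := RL (nm + 1) hn
      rw [if_neg h0] at h
      simp only [Nat.add_sub_cancel] at h
      have h2 := congrArg (fun t : ℂ => W (nm + 1) * ((starRingEnd ℂ) (V (nm + 1)) * t).re) h
      rw [if_neg h0]
      simp only [Nat.add_sub_cancel, Nat.succ_sub_one, mul_add, Complex.add_re, Complex.mul_re, Complex.mul_im, Complex.conj_re,
        Complex.conj_im, Complex.ofReal_re, Complex.ofReal_im, hPdef, hRdef,
        Complex.normSq_apply] at h2 ⊢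
      linear_combination h2
  set T := ∑ n ∈ Finset.range (N' + 1), W n * P n with hTdef
  have hTpos : 0 < T := by
    rw [hTdef]
    obtain ⟨k, hk⟩ := Function.ne_iff.mp hv0
    apply Finset.sum_pos' (fun n _ => mul_nonneg (hWpos n).le (hPnn n))
    refine ⟨(k : ℕ), Finset.mem_range.mpr k.isLt, ?_⟩
    apply mul_pos (hWpos _)
    have hVk : V (k : ℕ) = v k := by
      simp only [hVdef]; rw [dif_pos k.isLt]
    simp only [hPdef, hVk]
    exact Complex.normSq_pos.mpr hk
  -- summed identity
  have SUMID : (∑ n ∈ Finset.range (N' + 1), W n * D n * P n) +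
      (∑ n ∈ Finset.range N', (W n * Mu n + W (n + 1) * Nu n) * R n) = z.re * T := by
    have hkeysum : ∑ n ∈ Finset.range (N' + 1),
        (W n * D n * P n + W n * Mu n * R n +
          (if n = 0 then 0 else W n * Nu (n - 1) * R (n - 1)))
        = ∑ n ∈ Finset.range (N' + 1), z.re * (W n * P n) :=
      Finset.sum_congr rfl (fun n hn => key n (Finset.mem_range.mp hn))
    rw [Finset.sum_add_distrib, Finset.sum_add_distrib,
      Finset.sum_range_succ (fun n => W n * Mu n * R n),
      Finset.sum_range_succ' (fun n => if n = 0 then 0 else W n * Nu (n - 1) * R (n - 1)) N']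
      at hkeysum
    have hMuN : Mu N' = 0 := by
      simp only [hMudef]; rw [dif_neg (lt_irrefl _)]
    rw [hMuN] at hkeysum
    simp only [Nat.succ_ne_zero, if_false, if_true, ite_true, Nat.add_sub_cancel, mul_zero,
      zero_mul, add_zero] at hkeysum
    have hsplit : ∑ n ∈ Finset.range N', (W n * Mu n + W (n + 1) * Nu n) * R n
        = (∑ n ∈ Finset.range N', W n * Mu n * R n) +
          ∑ n ∈ Finset.range N', W (n + 1) * Nu n * R n := by
      rw [← Finset.sum_add_distrib]
      exact Finset.sum_congr rfl fun n _ => by ring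
    rw [hsplit, hTdef, Finset.mul_sum]
    linarith [hkeysum]
  -- diagonal bound
  have hdiag : m * T ≤ ∑ n ∈ Finset.range (N' + 1), W n * D n * P n := by
    rw [hTdef, Finset.mul_sum]
    apply Finset.sum_le_sum
    intro n hn
    have hnlt := Finset.mem_range.mp hn
    have hmle : m ≤ D n := by
      simp only [hDdef]; rw [dif_pos hnlt]
      exact ciInf_le (Finite.bddBelow_range δ) ⟨n, hnlt⟩
    have hnn := mul_nonneg (hWpos n).le (hPnn n)
    calc m * (W n * P n) ≤ D n * (W n * P n) := mul_le_mul_of_nonneg_right hmle hnn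
      _ = W n * D n * P n := by ring
  -- cross-term bound
  have hcross : -(e * T) ≤ ∑ n ∈ Finset.range N', (W n * Mu n + W (n + 1) * Nu n) * R n := by
    have hterm : ∀ n ∈ Finset.range N',
        -(e / 2 * (W n * P n + W (n + 1) * P (n + 1)))
          ≤ (W n * Mu n + W (n + 1) * Nu n) * R n := by
      intro n _
      have hr : |R n| ≤ ‖V n‖ * ‖V (n + 1)‖ := by
        calc |R n| ≤ ‖(starRingEnd ℂ) (V n) * V (n + 1)‖ := by
              simp only [hRdef]; exact Complex.abs_re_le_norm _
          _ = ‖V n‖ * ‖V (n + 1)‖ := by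
              rw [norm_mul, Complex.norm_conj]
      have hb := tkey e (Mu n) (Nu n) (W n) (‖V n‖) (‖V (n + 1)‖)
        (R n) hepos (hWpos n) (hMVle n) (norm_nonneg _) (norm_nonneg _) hr
      have hW1 : W n * tcoef e (Mu n) (Nu n) = W (n + 1) := (hWsucc n).symm
      rw [hW1, Complex.sq_norm, Complex.sq_norm] at hb
      exact hb
    have h1 := Finset.sum_le_sum hterm
    have h2 : ∑ n ∈ Finset.range N', -(e / 2 * (W n * P n + W (n + 1) * P (n + 1)))
        = -(e / 2 * ((∑ n ∈ Finset.range N', W n * P n) +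
            ∑ n ∈ Finset.range N', W (n + 1) * P (n + 1))) := by
      rw [← Finset.sum_add_distrib, Finset.mul_sum, ← Finset.sum_neg_distrib]
    have hS1 : ∑ n ∈ Finset.range N', W n * P n ≤ T := by
      rw [hTdef]
      exact Finset.sum_le_sum_of_subset_of_nonneg
        (Finset.range_subset_range.mpr (by omega))
        (fun i _ _ => mul_nonneg (hWpos i).le (hPnn i))
    have hS2 : ∑ n ∈ Finset.range N', W (n + 1) * P (n + 1) ≤ T := by
      rw [hTdef, Finset.sum_range_succ' (fun n => W n * P n) N']
      have := mul_nonneg (hWpos 0).le (hPnn 0)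
      linarith
    rw [h2] at h1
    have hmul := mul_le_mul_of_nonneg_left (add_le_add hS1 hS2) (by linarith : (0:ℝ) ≤ e / 2)
    linarith
  have : (m - e) * T ≤ z.re * T := by nlinarith
  have hfin : m - e ≤ z.re := le_of_mul_le_mul_right this hTpos
  rw [he] at hfin
  linarith
end

section
/- Let N ≥ 1 and let A be the real N×N tridiagonal matrix with diagonal entries δ₁, …, δ_N, superdiagonal entries μ₁, …, μ_{N−1}, and subdiagonal entries ν₁, …, ν_{N−1} (all other entries zero). Assume δ_k > 0 for every k and μ_k·ν_k ≤ 0 for every k. Then every real eigenvalue E of A satisfies E ≥ min_k δ_k. -/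
set_option maxHeartbeats 1000000


/-- a real tridiagonal matrix with positive diagonal and
non-positive products of off-diagonal entries has no real eigenvalue below the
minimum of its diagonal. -/
theorem tridiagonal_real_eigenvalue_lower_bound
    (N : ℕ) (hN : 1 ≤ N)
    (δ μ ν : Fin N → ℝ)
    (A : Matrix (Fin N) (Fin N) ℝ)
    (hA : ∀ i j : Fin N, A i j =
      if i = j then δ i
      else if (i : ℕ) + 1 = (j : ℕ) then μ i
      else if (j : ℕ) + 1 = (i : ℕ) then ν j
      else 0)
    (hδ : ∀ k : Fin N, 0 < δ k)
    (hμν : ∀ k : Fin N, (k : ℕ) + 1 < N → μ k * ν k ≤ 0)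
    (E : ℝ)
    (hE : ∃ v : Fin N → ℂ, v ≠ 0 ∧
      (A.map (Complex.ofReal)).mulVec v = (E : ℂ) • v) :
    (⨅ k : Fin N, δ k) ≤ E := by
  obtain ⟨v, hv0, hveq⟩ := hE
  set m := ⨅ k : Fin N, δ k with hmdef
  have hmle : ∀ k : Fin N, m ≤ δ k := fun k =>
    ciInf_le (Set.Finite.bddBelow (Set.finite_range δ)) k
  refine le_of_forall_pos_le_add (fun ε hε => ?_)
  -- ℕ-indexed versions of all data (junk values outside `Fin N`)
  set V : ℕ → ℂ := fun i => if h : i < N then v ⟨i, h⟩ else 0 with hVdef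
  set δ' : ℕ → ℝ := fun i => if h : i < N then δ ⟨i, h⟩ else 0 with hδdef
  set μ' : ℕ → ℝ := fun i => if h : i < N then μ ⟨i, h⟩ else 0 with hμdef
  set ν' : ℕ → ℝ := fun i => if h : i < N then ν ⟨i, h⟩ else 0 with hνdef
  have hVF : ∀ i : Fin N, V (i : ℕ) = v i := by
    intro i; simp [hVdef, i.isLt]
  have hδF : ∀ i : Fin N, δ' (i : ℕ) = δ i := by
    intro i; simp [hδdef, i.isLt]
  have hμF : ∀ i : Fin N, μ' (i : ℕ) = μ i := by
    intro i; simp [hμdef, i.isLt]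
  have hνF : ∀ i : Fin N, ν' (i : ℕ) = ν i := by
    intro i; simp [hνdef, i.isLt]
  have hVN : ∀ i, N ≤ i → V i = 0 := by
    intro i hi; simp [hVdef]; omega
  -- the diagonal scaling ratios
  set t : ℕ → ℝ := fun k =>
    if hk : k + 1 < N then
      (if μ' k = 0 then ε / (|ν' k| + 1)
       else if ν' k = 0 then (|μ' k| + 1) / ε
       else Real.sqrt (-(μ' k) / (ν' k))) else 1 with htdef
  have hprodneg : ∀ k, k + 1 < N → μ' k ≠ 0 → ν' k ≠ 0 → 0 < -(μ' k) / (ν' k) := by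
    intro k hk h1 h2
    have hkN : k < N := by omega
    have h3 : μ' k * ν' k ≤ 0 := by
      rw [hμdef, hνdef]; simp only [dif_pos hkN]
      exact hμν ⟨k, hkN⟩ hk
    have h4 : μ' k * ν' k < 0 := lt_of_le_of_ne h3 (mul_ne_zero h1 h2)
    rcases mul_neg_iff.mp h4 with ⟨ha, hb⟩ | ⟨ha, hb⟩
    · exact div_pos_of_neg_of_neg (by linarith) hb
    · exact div_pos (by linarith) hb
  have htpos : ∀ k, 0 < t k := by
    intro k
    simp only [htdef]
    by_cases hk : k + 1 < N
    · rw [dif_pos hk]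
      by_cases h1 : μ' k = 0
      · rw [if_pos h1]; positivity
      · rw [if_neg h1]
        by_cases h2 : ν' k = 0
        · rw [if_pos h2]; positivity
        · rw [if_neg h2]
          exact Real.sqrt_pos.mpr (hprodneg k hk h1 h2)
    · rw [dif_neg hk]; norm_num
  have htbound : ∀ k, k + 1 < N → |μ' k + ν' k * t k ^ 2| ≤ ε * t k := by
    intro k hk
    rw [htdef]; simp only [dif_pos hk]
    by_cases h1 : μ' k = 0
    · rw [if_pos h1, h1, zero_add]
      have hb : (0:ℝ) < |ν' k| + 1 := by positivity
      have e1 : |ν' k * (ε / (|ν' k| + 1)) ^ 2| = |ν' k| * (ε / (|ν' k| + 1)) ^ 2 := by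
        rw [abs_mul, abs_of_nonneg (by positivity : (0:ℝ) ≤ (ε / (|ν' k| + 1)) ^ 2)]
      rw [e1, pow_two, ← mul_assoc]
      have key : |ν' k| * (ε / (|ν' k| + 1)) ≤ ε := by
        rw [← mul_div_assoc, div_le_iff₀ hb]
        nlinarith [abs_nonneg (ν' k)]
      have hq : (0:ℝ) ≤ ε / (|ν' k| + 1) := by positivity
      exact mul_le_mul_of_nonneg_right key hq
    · rw [if_neg h1]
      by_cases h2 : ν' k = 0
      · rw [if_pos h2, h2, zero_mul, add_zero]
        have e1 : ε * ((|μ' k| + 1) / ε) = |μ' k| + 1 := by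
          field_simp
        rw [e1]
        linarith [abs_nonneg (μ' k)]
      · rw [if_neg h2]
        have h3 := hprodneg k hk h1 h2
        have e1 : Real.sqrt (-(μ' k) / (ν' k)) ^ 2 = -(μ' k) / (ν' k) :=
          Real.sq_sqrt h3.le
        rw [e1]
        have e2 : μ' k + ν' k * (-(μ' k) / ν' k) = 0 := by
          field_simp
          ring
        rw [e2, abs_zero]
        positivity
  -- cumulative scaling
  set D : ℕ → ℝ := fun n => ∏ j ∈ Finset.range n, t j with hDdef
  have hDpos : ∀ n, 0 < D n := by
    intro n; rw [hDdef]; exact Finset.prod_pos (fun j _ => htpos j)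
  have hDs : ∀ n, D (n + 1) = D n * t n := by
    intro n; rw [hDdef]; exact Finset.prod_range_succ t n
  have hcoefD : ∀ k, k + 1 < N →
      |μ' k * D k ^ 2 + ν' k * D (k + 1) ^ 2| ≤ ε * (D k * D (k + 1)) := by
    intro k hk
    rw [hDs k]
    have e1 : μ' k * D k ^ 2 + ν' k * (D k * t k) ^ 2
        = D k ^ 2 * (μ' k + ν' k * t k ^ 2) := by ring
    rw [e1, abs_mul, abs_of_nonneg (sq_nonneg (D k))]
    have := mul_le_mul_of_nonneg_left (htbound k hk) (sq_nonneg (D k))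
    calc D k ^ 2 * |μ' k + ν' k * t k ^ 2| ≤ D k ^ 2 * (ε * t k) := this
      _ = ε * (D k * (D k * t k)) := by ring
  -- the real symmetric pairing
  set R : ℕ → ℕ → ℝ := fun i j => ((starRingEnd ℂ) (V i) * V j).re with hRdef
  have hRsymm : ∀ i j, R i j = R j i := by
    intro i j
    simp only [hRdef, Complex.mul_re, Complex.conj_re, Complex.conj_im]
    ring
  have hRdiag : ∀ i, R i i = Complex.normSq (V i) := by
    intro i
    simp only [hRdef, Complex.mul_re, Complex.conj_re, Complex.conj_im,
      Complex.normSq_apply]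
    ring
  have hRnn : ∀ i, 0 ≤ R i i := fun i => (hRdiag i) ▸ Complex.normSq_nonneg _
  have hRbound : ∀ i j, |R i j| ≤ ‖V i‖ * ‖V j‖ := by
    intro i j
    refine le_trans (Complex.abs_re_le_norm _) ?_
    rw [norm_mul, Complex.norm_conj]
  have hRzero : ∀ i j, N ≤ j → R i j = 0 := by
    intro i j hj; simp [hRdef, hVN j hj]
  have hRzero' : ∀ i j, N ≤ i → R i j = 0 := by
    intro i j hi; simp [hRdef, hVN i hi]
  -- the total weight
  set S : ℝ := ∑ i ∈ Finset.range N, D i ^ 2 * R i i with hSdef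
  have hSpos : 0 < S := by
    obtain ⟨i0, hi0⟩ := Function.ne_iff.mp hv0
    rw [hSdef]
    refine Finset.sum_pos' (fun i _ => ?_) ⟨(i0 : ℕ), Finset.mem_range.mpr i0.isLt, ?_⟩
    · exact mul_nonneg (sq_nonneg _) (hRnn i)
    · have : R (i0 : ℕ) (i0 : ℕ) = Complex.normSq (v i0) := by
        rw [hRdiag, hVF]
      rw [this]
      have h2 : 0 < Complex.normSq (v i0) := by
        simpa [Complex.normSq_pos] using hi0
      exact mul_pos (pow_pos (hDpos _) 2) h2
  -- the eigenvalue equation rowwise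
  have hrow : ∀ i : Fin N, (∑ j : Fin N, (A i j : ℂ) * v j) = (E : ℂ) * v i := by
    intro i
    have := congrFun hveq i
    simpa [Matrix.mulVec, dotProduct, Matrix.map_apply, Pi.smul_apply,
      smul_eq_mul] using this
  have hrowR : ∀ i : Fin N,
      (∑ j : Fin N, A i j * R (i : ℕ) (j : ℕ)) = E * R (i : ℕ) (i : ℕ) := by
    intro i
    have h1 := congrArg (fun z => ((starRingEnd ℂ) (v i) * z).re) (hrow i)
    simp only [Finset.mul_sum] at h1
    rw [Complex.re_sum] at h1
    have e2 : ∀ j : Fin N, ((starRingEnd ℂ) (v i) * ((A i j : ℂ) * v j)).re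
        = A i j * R (i : ℕ) (j : ℕ) := by
      intro j
      rw [mul_left_comm, Complex.re_ofReal_mul, hRdef]
      simp only []
      rw [hVF i, hVF j]
    have e3 : ((starRingEnd ℂ) (v i) * ((E : ℂ) * v i)).re = E * R (i : ℕ) (i : ℕ) := by
      rw [mul_left_comm, Complex.re_ofReal_mul, hRdef]
      simp only []
      rw [hVF i]
    rw [Finset.sum_congr rfl (fun j _ => e2 j)] at h1
    rw [h1, e3]
  -- decompose each row
  have hinner : ∀ i : Fin N,
      (∑ j : Fin N, A i j * R (i : ℕ) (j : ℕ))
        = δ' (i : ℕ) * R (i : ℕ) (i : ℕ) + μ' (i : ℕ) * R (i : ℕ) ((i : ℕ) + 1)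
          + (if (i : ℕ) = 0 then 0 else ν' ((i : ℕ) - 1) * R (i : ℕ) ((i : ℕ) - 1)) := by
    intro i
    have hsplit : ∀ j : Fin N, A i j * R (i : ℕ) (j : ℕ) =
        (if i = j then δ i * R (i : ℕ) (j : ℕ) else 0)
        + ((if (i : ℕ) + 1 = (j : ℕ) then μ i * R (i : ℕ) (j : ℕ) else 0)
        + (if (j : ℕ) + 1 = (i : ℕ) then ν j * R (i : ℕ) (j : ℕ) else 0)) := by
      intro j
      rw [hA i j]
      simp only [Fin.ext_iff]
      split_ifs <;> (try ring) <;> (exfalso; omega)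
    rw [Finset.sum_congr rfl (fun j _ => hsplit j), Finset.sum_add_distrib,
      Finset.sum_add_distrib]
    have hsum1 : (∑ j : Fin N, if i = j then δ i * R (i : ℕ) (j : ℕ) else 0)
        = δ' (i : ℕ) * R (i : ℕ) (i : ℕ) := by
      rw [Finset.sum_ite_eq Finset.univ i (fun j => δ i * R (i : ℕ) (j : ℕ)),
        if_pos (Finset.mem_univ i), hδF]
    have hsum2 : (∑ j : Fin N, if (i : ℕ) + 1 = (j : ℕ) then μ i * R (i : ℕ) (j : ℕ) else 0)
        = μ' (i : ℕ) * R (i : ℕ) ((i : ℕ) + 1) := by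
      by_cases hi : (i : ℕ) + 1 < N
      · rw [Finset.sum_eq_single (⟨(i : ℕ) + 1, hi⟩ : Fin N)]
        · rw [if_pos rfl, hμF]
        · intro b _ hb
          rw [if_neg]
          intro hc
          exact hb (Fin.ext hc.symm)
        · intro h; exact absurd (Finset.mem_univ _) h
      · rw [Finset.sum_eq_zero, hRzero _ _ (by omega), mul_zero]
        intro j _
        rw [if_neg]
        have := j.isLt
        omega
    have hsum3 : (∑ j : Fin N, if (j : ℕ) + 1 = (i : ℕ) then ν j * R (i : ℕ) (j : ℕ) else 0)
        = (if (i : ℕ) = 0 then 0 else ν' ((i : ℕ) - 1) * R (i : ℕ) ((i : ℕ) - 1)) := by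
      by_cases hi : (i : ℕ) = 0
      · rw [if_pos hi, Finset.sum_eq_zero]
        intro j _
        rw [if_neg]
        omega
      · rw [if_neg hi]
        have hi1 : (i : ℕ) - 1 < N := by have := i.isLt; omega
        rw [Finset.sum_eq_single (⟨(i : ℕ) - 1, hi1⟩ : Fin N)]
        · rw [if_pos (by simp; omega)]
          rw [hνF ⟨(i : ℕ) - 1, hi1⟩]
        · intro b _ hb
          rw [if_neg]
          intro hc
          exact hb (Fin.ext (by simp; omega))
        · intro h; exact absurd (Finset.mem_univ _) h
    rw [hsum1, hsum2, hsum3, add_assoc]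
  -- the main identity, over `range N`
  have hEi : ∀ i, i < N → E * R i i
      = δ' i * R i i + μ' i * R i (i + 1)
        + (if i = 0 then 0 else ν' (i - 1) * R i (i - 1)) := by
    intro i hi
    have h1 := hrowR ⟨i, hi⟩
    have h2 := hinner ⟨i, hi⟩
    simp only [] at h1 h2
    rw [← h1, h2]
  have hmain : E * S = ∑ i ∈ Finset.range N,
      (D i ^ 2 * (δ' i * R i i) + D i ^ 2 * (μ' i * R i (i + 1))
        + D i ^ 2 * (if i = 0 then 0 else ν' (i - 1) * R i (i - 1))) := by
    rw [hSdef, Finset.mul_sum]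
    refine Finset.sum_congr rfl (fun i hi => ?_)
    have hiN : i < N := Finset.mem_range.mp hi
    rw [show E * (D i ^ 2 * R i i) = D i ^ 2 * (E * R i i) from by ring, hEi i hiN]
    ring
  -- shift the subdiagonal sum
  obtain ⟨M, hM⟩ : ∃ M, N = M + 1 := ⟨N - 1, by omega⟩
  have hshift : (∑ i ∈ Finset.range N,
        D i ^ 2 * (if i = 0 then 0 else ν' (i - 1) * R i (i - 1)))
      = ∑ k ∈ Finset.range N, D (k + 1) ^ 2 * (ν' k * R (k + 1) k) := by
    subst hM
    rw [Finset.sum_range_succ'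
      (fun i => D i ^ 2 * (if i = 0 then 0 else ν' (i - 1) * R i (i - 1))) M]
    rw [Finset.sum_range_succ (fun k => D (k + 1) ^ 2 * (ν' k * R (k + 1) k)) M]
    simp only [Nat.succ_ne_zero, ite_false, ite_true, Nat.add_sub_cancel,
      mul_zero, add_zero]
    rw [hRzero' (M + 1) M (le_refl _), mul_zero, mul_zero, add_zero]
  have hS' : (∑ k ∈ Finset.range N, D (k + 1) ^ 2 * R (k + 1) (k + 1)) ≤ S := by
    have e1 := Finset.sum_range_succ' (fun j => D j ^ 2 * R j j) N
    have e2 := Finset.sum_range_succ (fun j => D j ^ 2 * R j j) N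
    rw [e2] at e1
    have e3 : R N N = 0 := hRzero _ _ (le_refl _)
    have e4 : 0 ≤ D 0 ^ 2 * R 0 0 := mul_nonneg (sq_nonneg _) (hRnn 0)
    rw [hSdef]
    rw [e3, mul_zero, add_zero] at e1
    linarith [e1]
  -- per-index lower bound on the cross terms
  have hcross : ∀ k, k < N →
      -(ε / 2) * (D k ^ 2 * R k k + D (k + 1) ^ 2 * R (k + 1) (k + 1))
        ≤ (μ' k * D k ^ 2 + ν' k * D (k + 1) ^ 2) * R k (k + 1) := by
    intro k hk
    by_cases hk1 : k + 1 < N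
    · set c := μ' k * D k ^ 2 + ν' k * D (k + 1) ^ 2 with hc
      set r := R k (k + 1) with hr
      set a := ‖V k‖ with ha
      set b := ‖V (k + 1)‖ with hb
      have h1 : |c| ≤ ε * (D k * D (k + 1)) := hcoefD k hk1
      have h2 : |r| ≤ a * b := hRbound k (k + 1)
      have h3 : a ^ 2 = R k k := by rw [ha, Complex.sq_norm, hRdiag]
      have h4 : b ^ 2 = R (k + 1) (k + 1) := by rw [hb, Complex.sq_norm, hRdiag]
      have h5 : |c * r| ≤ (ε * (D k * D (k + 1))) * (a * b) := by
        rw [abs_mul]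
        exact mul_le_mul h1 h2 (abs_nonneg _) (mul_nonneg hε.le (mul_nonneg (hDpos k).le (hDpos (k+1)).le))
      have h6 : (ε * (D k * D (k + 1))) * (a * b)
          ≤ ε / 2 * (D k ^ 2 * a ^ 2 + D (k + 1) ^ 2 * b ^ 2) := by
        nlinarith [sq_nonneg (D k * a - D (k + 1) * b), hε.le]
      have h7 := neg_abs_le (c * r)
      rw [← h3, ← h4, neg_mul]
      exact le_trans (neg_le_neg (h5.trans h6)) h7
    · have hV1 : V (k + 1) = 0 := hVN _ (by omega)
      have e1 : R k (k + 1) = 0 := hRzero _ _ (by omega)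
      have e2 : R (k + 1) (k + 1) = 0 := hRzero _ _ (by omega)
      rw [e1, e2]
      nlinarith [mul_nonneg (sq_nonneg (D k)) (hRnn k), hε.le]
  -- diagonal part dominates m * S
  have hdiag : m * S ≤ ∑ i ∈ Finset.range N, D i ^ 2 * (δ' i * R i i) := by
    rw [hSdef, Finset.mul_sum]
    refine Finset.sum_le_sum (fun i hi => ?_)
    have hiN : i < N := Finset.mem_range.mp hi
    have h1 : m ≤ δ' i := by
      rw [hδdef]; simp only [dif_pos hiN]; exact hmle _
    have h0 : 0 ≤ D i ^ 2 * R i i := mul_nonneg (sq_nonneg _) (hRnn i)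
    calc m * (D i ^ 2 * R i i) ≤ δ' i * (D i ^ 2 * R i i) :=
          mul_le_mul_of_nonneg_right h1 h0
      _ = D i ^ 2 * (δ' i * R i i) := by ring
  -- assemble
  have hEq2 : E * S = (∑ i ∈ Finset.range N, D i ^ 2 * (δ' i * R i i))
      + ∑ k ∈ Finset.range N, (μ' k * D k ^ 2 + ν' k * D (k + 1) ^ 2) * R k (k + 1) := by
    rw [hmain, Finset.sum_add_distrib, hshift, Finset.sum_add_distrib, add_assoc,
      ← Finset.sum_add_distrib]
    congr 1
    refine Finset.sum_congr rfl (fun k _ => ?_)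
    rw [hRsymm (k + 1) k]
    ring
  have hcrossS : -(ε * S) ≤ ∑ k ∈ Finset.range N,
      (μ' k * D k ^ 2 + ν' k * D (k + 1) ^ 2) * R k (k + 1) := by
    have h1 := Finset.sum_le_sum
      (fun k hk => hcross k (Finset.mem_range.mp hk))
    have h2 : (∑ k ∈ Finset.range N,
        -(ε / 2) * (D k ^ 2 * R k k + D (k + 1) ^ 2 * R (k + 1) (k + 1)))
        = -(ε / 2) * (S + ∑ k ∈ Finset.range N, D (k + 1) ^ 2 * R (k + 1) (k + 1)) := by
      rw [hSdef, ← Finset.mul_sum, Finset.sum_add_distrib]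
    rw [h2] at h1
    have h3 : -(ε * S) ≤ -(ε / 2) * (S + ∑ k ∈ Finset.range N,
        D (k + 1) ^ 2 * R (k + 1) (k + 1)) := by
      nlinarith [hS', hε.le]
    linarith
  have hfinal : m * S - ε * S ≤ E * S := by
    rw [hEq2]
    linarith [hdiag, hcrossS]
  nlinarith [hSpos, hfinal]
end

section
/- Let a ∈ ℝ and N ≥ 1, and let 𝓘_N(a) be the N×N matrix (rows and columns indexed by k, k' ∈ {1, …, N}) with entries k² when k' = k, (k'−k)·k'·a when |k − k'| = 1 (i.e. superdiagonal entries (k+1)a and subdiagonal entries −ka), and 0 otherwise. Then every eigenvalue z ∈ ℂ of 𝓘_N(a) satisfies: Re(z) ≥ 1 or |Im(z)| ≥ (3/π)·(1 − Re(z)). In particular, every real eigenvalue of 𝓘_N(a) is ≥ 1. -/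
open Real

/-- eigenvalues of the truncated Ince matrix `𝓘_N(a)` (diagonal
`k²`, superdiagonal `(k+1)a`, subdiagonal `−ka`, for `1 ≤ k ≤ N`) avoid the open
sector `{Re z < 1, |Im z| < (3/π)(1 − Re z)}`; in particular real eigenvalues
are `≥ 1`. Rows and columns are indexed by `i : Fin N`, corresponding to
`k = i + 1`. -/
theorem ince_matrix_eigenvalue_exclusion
    (a : ℝ) (N : ℕ) (hN : 1 ≤ N)
    (A : Matrix (Fin N) (Fin N) ℝ)
    (hA : ∀ i j : Fin N, A i j =
      if i = j then (((i : ℕ) + 1 : ℕ) : ℝ) ^ 2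
      else if (i : ℕ) + 1 = (j : ℕ) then (((j : ℕ) + 1 : ℕ) : ℝ) * a
      else if (j : ℕ) + 1 = (i : ℕ) then -((((j : ℕ) + 1 : ℕ) : ℝ) * a)
      else 0) :
    (∀ z : ℂ,
      (∃ v : Fin N → ℂ, v ≠ 0 ∧ (A.map (Complex.ofReal)).mulVec v = z • v) →
      1 ≤ z.re ∨ (3 / π) * (1 - z.re) ≤ |z.im|) ∧
    (∀ E : ℝ,
      (∃ v : Fin N → ℂ, v ≠ 0 ∧ (A.map (Complex.ofReal)).mulVec v = (E : ℂ) • v) →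
      1 ≤ E) := by
  have key : ∀ z : ℂ,
      (∃ v : Fin N → ℂ, v ≠ 0 ∧ (A.map (Complex.ofReal)).mulVec v = z • v) →
      1 ≤ z.re := by
    rintro z ⟨v, hv, heig⟩
    set c : Fin N → ℝ := fun i => (i : ℕ) + 1 with hc
    set q : Fin N → ℝ := fun i => Complex.normSq (v i) with hq
    have hq0 : ∀ i, 0 ≤ q i := fun i => Complex.normSq_nonneg _
    have hc1 : ∀ i, (1:ℝ) ≤ c i := by
      intro i
      have : (0:ℝ) ≤ ((i:ℕ):ℝ) := Nat.cast_nonneg _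
      simp only [hc]; linarith
    set s : ℝ := ∑ i, c i * q i with hs
    have hspos : 0 < s := by
      apply Finset.sum_pos'
      · intro i _
        exact mul_nonneg (le_trans zero_le_one (hc1 i)) (hq0 i)
      · obtain ⟨i0, hi0⟩ : ∃ i, v i ≠ 0 := by
          by_contra h
          push_neg at h
          exact hv (funext h)
        refine ⟨i0, Finset.mem_univ _, ?_⟩
        have : 0 < q i0 := Complex.normSq_pos.mpr hi0
        have := hc1 i0
        nlinarith
    set g : Fin N → Fin N → ℝ :=
      fun i j => c i * A i j * ((starRingEnd ℂ) (v i) * v j).re with hg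
    -- row sums
    have hrow : ∀ i, ∑ j, g i j = c i * (z.re * q i) := by
      intro i
      have hmv : ∑ j, ((A i j : ℂ) * v j) = z * v i := by
        have h := congrFun heig i
        simpa [Matrix.mulVec, Matrix.map_apply, dotProduct, Pi.smul_apply,
          smul_eq_mul] using h
      have h1 : ∑ j, g i j
          = c i * ((starRingEnd ℂ) (v i) * (z * v i)).re := by
        rw [← hmv, Finset.mul_sum, Complex.re_sum, Finset.mul_sum]
        refine Finset.sum_congr rfl fun j _ => ?_
        simp only [hg, Complex.mul_re, Complex.mul_im, Complex.ofReal_re,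
          Complex.ofReal_im]
        ring
      rw [h1]
      simp only [hq, Complex.mul_re, Complex.mul_im, Complex.normSq_apply,
        Complex.conj_re, Complex.conj_im]
      ring
    -- pairing
    have hre : ∀ i j, ((starRingEnd ℂ) (v j) * v i).re
        = ((starRingEnd ℂ) (v i) * v j).re := by
      intro i j
      simp only [Complex.mul_re, Complex.conj_re, Complex.conj_im]
      ring
    have hpair : ∀ i j, g i j + g j i
        = if i = j then 2 * (c i * (c i)^2 * q i) else 0 := by
      intro i j
      by_cases hij : i = j
      · subst hij
        simp only [if_pos rfl, hg, hq, hA i i, if_pos rfl,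
          Complex.mul_re, Complex.conj_re, Complex.conj_im,
          Complex.normSq_apply, hc]
        push_cast
        ring
      · rw [if_neg hij]
        have hco : c i * A i j + c j * A j i = 0 := by
          have hne : (i:ℕ) ≠ (j:ℕ) := fun h => hij (Fin.ext h)
          rw [hA i j, hA j i, if_neg hij, if_neg (Ne.symm hij)]
          by_cases h1 : (i:ℕ) + 1 = (j:ℕ)
          · rw [if_pos h1]
            have h2 : ¬ ((j:ℕ) + 1 = (i:ℕ)) := by omega
            rw [if_neg h2, if_pos h1]
            simp only [hc]
            push_cast
            ring
          · rw [if_neg h1]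
            by_cases h2 : (j:ℕ) + 1 = (i:ℕ)
            · rw [if_pos h2, if_pos h2]
              simp only [hc]
              push_cast
              ring
            · rw [if_neg h2, if_neg h2, if_neg h1]
              ring
        have : g i j + g j i
            = (c i * A i j + c j * A j i) * ((starRingEnd ℂ) (v i) * v j).re := by
          simp only [hg, hre i j]
          ring
        rw [this, hco, zero_mul]
    -- sum the pairing identity
    have hS : ∑ i, ∑ j, g i j = z.re * s := by
      rw [hs, Finset.mul_sum]
      refine Finset.sum_congr rfl fun i _ => ?_
      rw [hrow i]; ring
    have hswap : ∑ i : Fin N, ∑ j : Fin N, g j i = ∑ i, ∑ j, g i j :=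
      Finset.sum_comm
    have hdouble : 2 * (z.re * s) = ∑ i, 2 * (c i * (c i)^2 * q i) := by
      have h1 : ∑ i : Fin N, ∑ j : Fin N, (g i j + g j i)
          = ∑ i, 2 * (c i * (c i)^2 * q i) := by
        refine Finset.sum_congr rfl fun i _ => ?_
        rw [Finset.sum_congr rfl fun j _ => hpair i j]
        simp
      have h2 : ∑ i : Fin N, ∑ j : Fin N, (g i j + g j i)
          = (∑ i, ∑ j, g i j) + (∑ i : Fin N, ∑ j : Fin N, g j i) := by
        rw [← Finset.sum_add_distrib]
        refine Finset.sum_congr rfl fun i _ => ?_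
        rw [← Finset.sum_add_distrib]
      rw [h2, hswap, hS] at h1
      linarith
    -- termwise bound
    have hbound : s ≤ ∑ i, c i * (c i)^2 * q i := by
      rw [hs]
      refine Finset.sum_le_sum fun i _ => ?_
      have h1 := hc1 i
      have h2 := hq0 i
      have h3 : c i ≤ c i * c i ^ 2 := by nlinarith
      nlinarith [mul_le_mul_of_nonneg_right h3 h2]
    have hfinal : s ≤ z.re * s := by
      have : ∑ i, 2 * (c i * (c i)^2 * q i)
          = 2 * ∑ i, c i * (c i)^2 * q i := by
        rw [Finset.mul_sum]
      rw [this] at hdouble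
      linarith
    nlinarith
  constructor
  · intro z hz
    exact Or.inl (key z hz)
  · intro E hE
    have := key (E : ℂ) hE
    simpa using this
end

section
/- Let a ∈ ℝ, E ∈ ℝ, and let (c_k)_{k ≥ 1} be a square-summable sequence of complex numbers, not identically zero, and set c₀ := 0. Suppose that for every k ≥ 1: k²·c_k + a(k+1)·c_{k+1} − a(k−1)·c_{k−1} = E·c_k. Then E ≥ 1. -/
set_option maxHeartbeats 2000000

/-- every real eigenvalue of the infinite tridiagonal Ince matrix
`𝓘(a)` (diagonal `k²`, superdiagonal `(k+1)a`, subdiagonal `−ka`, `k ≥ 1`)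
associated to a nonzero square-summable eigenvector is `≥ 1`. -/
theorem ince_infinite_matrix_real_eigenvalue_ge_one
    (a E : ℝ) (c : ℕ → ℂ)
    (hc0 : c 0 = 0)
    (hl2 : Summable fun k : ℕ => ‖c k‖ ^ 2)
    (hne : c ≠ 0)
    (hrec : ∀ k : ℕ, 1 ≤ k →
      (k : ℂ) ^ 2 * c k + (a : ℂ) * ((k : ℂ) + 1) * c (k + 1)
        - (a : ℂ) * ((k : ℂ) - 1) * c (k - 1) = (E : ℂ) * c k) :
    1 ≤ E := by
  set f : ℕ → ℝ := fun k => ‖c k‖ with hfdef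
  have hfnn : ∀ k, 0 ≤ f k := fun k => norm_nonneg _
  -- basic norm bound from the recurrence
  have hbnd : ∀ k : ℕ, 1 ≤ k →
      (k:ℝ)^2 * f k ≤ |E| * f k + |a| * ((k:ℝ)+1) * f (k+1) + |a| * (k:ℝ) * f (k-1) := by
    intro k hk
    have h := hrec k hk
    have h2 : (k:ℂ)^2 * c k
        = (E:ℂ) * c k - (a:ℂ) * ((k:ℂ)+1) * c (k+1) + (a:ℂ) * ((k:ℂ)-1) * c (k-1) := by
      linear_combination h
    have hk1 : (1:ℝ) ≤ (k:ℝ) := by exact_mod_cast hk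
    have hn : ‖(k:ℂ)^2 * c k‖ = (k:ℝ)^2 * f k := by
      rw [norm_mul, norm_pow, Complex.norm_natCast]
    have hb : ‖(k:ℂ)^2 * c k‖ ≤ ‖(E:ℂ) * c k‖ + ‖(a:ℂ) * ((k:ℂ)+1) * c (k+1)‖
        + ‖(a:ℂ) * ((k:ℂ)-1) * c (k-1)‖ := by
      rw [h2]
      exact le_trans (norm_add_le _ _) (by gcongr; exact norm_sub_le _ _)
    have e1 : ‖(E:ℂ) * c k‖ = |E| * f k := by
      rw [norm_mul, Complex.norm_real, Real.norm_eq_abs]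
    have e2 : ‖(a:ℂ) * ((k:ℂ)+1) * c (k+1)‖ = |a| * ((k:ℝ)+1) * f (k+1) := by
      have hcast : ((k:ℂ)+1) = ((k+1:ℕ):ℂ) := by push_cast; ring
      rw [norm_mul, norm_mul, Complex.norm_real, Real.norm_eq_abs, hcast,
        Complex.norm_natCast]
      push_cast; ring
    have e3 : ‖(a:ℂ) * ((k:ℂ)-1) * c (k-1)‖ ≤ |a| * (k:ℝ) * f (k-1) := by
      have hcast : ((k:ℂ)-1) = ((k-1:ℕ):ℂ) := by push_cast [hk]; ring
      rw [norm_mul, norm_mul, Complex.norm_real, Real.norm_eq_abs, hcast,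
        Complex.norm_natCast]
      have hle : ((k-1:ℕ):ℝ) ≤ (k:ℝ) := by exact_mod_cast Nat.sub_le k 1
      have hf' : (0:ℝ) ≤ ‖c (k-1)‖ := norm_nonneg _
      have ha := abs_nonneg a
      calc |a| * ((k-1:ℕ):ℝ) * ‖c (k-1)‖ ≤ |a| * (k:ℝ) * ‖c (k-1)‖ := by
            exact mul_le_mul_of_nonneg_right (mul_le_mul_of_nonneg_left hle ha) hf'
        _ = |a| * (k:ℝ) * f (k-1) := rfl
    rw [hn, e1, e2] at hb
    linarith [hb, e3]
  set g : ℕ → ℝ := fun k => (k:ℝ) * f k with hgdef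
  have hgnn : ∀ k, 0 ≤ g k := fun k => mul_nonneg (by positivity) (hfnn k)
  -- summability of shifted squares
  have hsplus : Summable (fun k => f (k+1)^2) := (summable_nat_add_iff 1).2 hl2
  have hsminus : Summable (fun k => f (k-1)^2) := by
    apply (summable_nat_add_iff 1).1
    simpa using hl2
  -- Σ (k f k)² < ∞
  have hgle : ∀ k, g k ≤ |E| * f k + 2*|a| * f (k+1) + |a| * f (k-1) := by
    intro k
    rcases Nat.eq_zero_or_pos k with h0 | h1
    · subst h0
      simp only [hgdef, Nat.cast_zero, zero_mul]
      positivity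
    · have hb := hbnd k h1
      have hk1 : (1:ℝ) ≤ (k:ℝ) := by exact_mod_cast h1
      have hmul : (k:ℝ) * g k ≤ (k:ℝ) * (|E| * f k + 2*|a| * f (k+1) + |a| * f (k-1)) := by
        simp only [hgdef]
        nlinarith [hb, hfnn k, hfnn (k+1), hfnn (k-1), abs_nonneg a, abs_nonneg E,
          mul_nonneg (mul_nonneg (sub_nonneg.2 hk1) (abs_nonneg E)) (hfnn k),
          mul_nonneg (mul_nonneg (sub_nonneg.2 hk1) (abs_nonneg a)) (hfnn (k+1))]
      exact le_of_mul_le_mul_left hmul (by linarith)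
  have hg2 : Summable (fun k => g k ^ 2) := by
    apply Summable.of_nonneg_of_le (fun k => sq_nonneg _)
      (f := fun k => 3 * (E^2 * f k^2 + 4*a^2 * f (k+1)^2 + a^2 * f (k-1)^2))
    · intro k
      have h := hgle k
      have h1 := hgnn k
      nlinarith [sq_nonneg (|E| * f k - 2*|a| * f (k+1)), sq_nonneg (|E| * f k - |a| * f (k-1)),
        sq_nonneg (2*|a| * f (k+1) - |a| * f (k-1)), sq_abs E, sq_abs a,
        hfnn k, hfnn (k+1), hfnn (k-1), abs_nonneg a, abs_nonneg E]
    · exact (((hl2.mul_left _).add (hsplus.mul_left _)).add (hsminus.mul_left _)).mul_left 3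
  have hgplus : Summable (fun k => g (k+1)^2) := (summable_nat_add_iff 1).2 hg2
  have hgminus : Summable (fun k => g (k-1)^2) := by
    apply (summable_nat_add_iff 1).1
    exact hg2
  -- Σ (k² f k)² < ∞
  set h : ℕ → ℝ := fun k => (k:ℝ)^2 * f k with hhdef
  have hhle : ∀ k, h k ≤ |E| * f k + |a| * g (k+1) + |a| * g (k-1) + |a| * f (k-1) := by
    intro k
    rcases Nat.eq_zero_or_pos k with h0 | h1
    · subst h0
      have e0 : h 0 = 0 := by simp [hhdef]
      rw [e0]
      simp only [Nat.zero_sub, Nat.zero_add]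
      have t1 : 0 ≤ |E| * f 0 := mul_nonneg (abs_nonneg E) (hfnn 0)
      have t2 : 0 ≤ |a| * g 1 := mul_nonneg (abs_nonneg a) (hgnn 1)
      have t3 : 0 ≤ |a| * g 0 := mul_nonneg (abs_nonneg a) (hgnn 0)
      have t4 : 0 ≤ |a| * f 0 := mul_nonneg (abs_nonneg a) (hfnn 0)
      linarith
    · have hb := hbnd k h1
      have hcast : ((k-1 : ℕ) : ℝ) = (k:ℝ) - 1 := by
        have : (1:ℕ) ≤ k := h1
        push_cast [this]; ring
      have e1 : |a| * ((k:ℝ)+1) * f (k+1) = |a| * g (k+1) := by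
        simp only [hgdef]; push_cast; ring
      have e2 : |a| * (k:ℝ) * f (k-1) = |a| * g (k-1) + |a| * f (k-1) := by
        simp only [hgdef, hcast]; ring
      simp only [hhdef]
      linarith [hb, e1.le, e2.le]
  have hh2 : Summable (fun k => h k ^ 2) := by
    apply Summable.of_nonneg_of_le
      (fun k => sq_nonneg _)
      (f := fun k => 4 * (E^2 * f k^2 + a^2 * g (k+1)^2 + a^2 * g (k-1)^2 + a^2 * f (k-1)^2))
    · intro k
      have hle := hhle k
      have hnn : 0 ≤ h k := mul_nonneg (by positivity) (hfnn k)
      nlinarith [sq_nonneg (|E| * f k - |a| * g (k+1)), sq_nonneg (|E| * f k - |a| * g (k-1)),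
        sq_nonneg (|E| * f k - |a| * f (k-1)), sq_nonneg (|a| * g (k+1) - |a| * g (k-1)),
        sq_nonneg (|a| * g (k+1) - |a| * f (k-1)), sq_nonneg (|a| * g (k-1) - |a| * f (k-1)),
        sq_abs E, sq_abs a, hfnn k, hgnn (k+1), hgnn (k-1), hfnn (k-1),
        abs_nonneg a, abs_nonneg E]
    · exact ((((hl2.mul_left _).add (hgplus.mul_left _)).add
        (hgminus.mul_left _)).add (hsminus.mul_left _)).mul_left 4
  -- the four sequences in the summed identity
  set A : ℕ → ℝ := fun k => (k:ℝ)^3 * f k ^ 2 with hAdef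
  set B : ℕ → ℝ := fun k => (k:ℝ) * f k ^ 2 with hBdef
  set p : ℕ → ℝ := fun k => a * (k:ℝ) * ((k:ℝ)+1) * (c (k+1) * (starRingEnd ℂ) (c k)).re with hpdef
  set q : ℕ → ℝ := fun k => a * (k:ℝ) * ((k:ℝ)-1) * (c (k-1) * (starRingEnd ℂ) (c k)).re with hqdef
  have hA : Summable A := by
    apply Summable.of_nonneg_of_le (fun k => by positivity)
      (f := fun k => g k ^2 + h k ^2) _ (hg2.add hh2)
    intro k
    simp only [hAdef, hgdef, hhdef]
    nlinarith [sq_nonneg ((k:ℝ) * f k - (k:ℝ)^2 * f k)]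
  have hB : Summable B := by
    apply Summable.of_nonneg_of_le (fun k => by positivity)
      (f := fun k => f k ^2 + g k ^2) _ (hl2.add hg2)
    intro k
    simp only [hBdef, hgdef]
    nlinarith [sq_nonneg (f k - (k:ℝ) * f k)]
  have hrebound : ∀ z w : ℂ, |(z * (starRingEnd ℂ) w).re| ≤ ‖z‖ * ‖w‖ := by
    intro z w
    calc |(z * (starRingEnd ℂ) w).re| ≤ ‖z * (starRingEnd ℂ) w‖ := Complex.abs_re_le_norm _
      _ = ‖z‖ * ‖w‖ := by rw [norm_mul, RCLike.norm_conj]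
  have hp : Summable p := by
    apply Summable.of_abs
    apply Summable.of_nonneg_of_le (fun k => abs_nonneg _)
      (f := fun k => |a| * (g k ^2 + g (k+1)^2)) _ ((hg2.add hgplus).mul_left _)
    intro k
    simp only [hpdef]
    have h1 := hrebound (c (k+1)) (c k)
    have h2 : |a * (k:ℝ) * ((k:ℝ)+1) * (c (k+1) * (starRingEnd ℂ) (c k)).re|
        = |a| * ((k:ℝ) * ((k:ℝ)+1)) * |(c (k+1) * (starRingEnd ℂ) (c k)).re| := by
      rw [abs_mul, abs_mul, abs_mul]
      rw [abs_of_nonneg (show (0:ℝ) ≤ (k:ℝ) by positivity),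
        abs_of_nonneg (show (0:ℝ) ≤ (k:ℝ)+1 by positivity)]
      ring
    rw [h2]
    have hgk : g k = (k:ℝ) * f k := rfl
    have hgk1 : g (k+1) = ((k:ℝ)+1) * f (k+1) := by simp only [hgdef]; push_cast; ring
    have key : (k:ℝ) * ((k:ℝ)+1) * |(c (k+1) * (starRingEnd ℂ) (c k)).re|
        ≤ g k ^2 + g (k+1)^2 := by
      have h3 : (k:ℝ) * ((k:ℝ)+1) * |(c (k+1) * (starRingEnd ℂ) (c k)).re|
          ≤ (k:ℝ) * ((k:ℝ)+1) * (f (k+1) * f k) := by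
        apply mul_le_mul_of_nonneg_left h1 (by positivity)
      have h4 : (k:ℝ) * ((k:ℝ)+1) * (f (k+1) * f k) = g k * g (k+1) := by
        rw [hgk, hgk1]; ring
      nlinarith [sq_nonneg (g k - g (k+1))]
    nlinarith [abs_nonneg a, abs_nonneg ((c (k+1) * (starRingEnd ℂ) (c k)).re), key,
      mul_le_mul_of_nonneg_left key (abs_nonneg a)]
  have hq0 : q 0 = 0 := by simp [hqdef]
  have hqshift : ∀ n, q (n+1) = p n := by
    intro n
    simp only [hqdef, hpdef, Nat.add_sub_cancel]
    have hcast : ((n+1 : ℕ) : ℝ) = (n:ℝ) + 1 := by push_cast; ring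
    rw [hcast]
    have hre : (c n * (starRingEnd ℂ) (c (n+1))).re = (c (n+1) * (starRingEnd ℂ) (c n)).re := by
      simp [Complex.mul_re, Complex.conj_re, Complex.conj_im]
      ring
    rw [hre]
    ring
  have hq : Summable q := by
    apply (summable_nat_add_iff 1).1
    simpa [hqshift] using hp
  have hqp : ∑' k, q k = ∑' k, p k := by
    rw [Summable.tsum_eq_zero_add hq, hq0]
    simp only [hqshift, zero_add]
  -- termwise identity
  have hid : ∀ k, A k + p k - q k = E * B k := by
    intro k
    rcases Nat.eq_zero_or_pos k with h0 | h1
    · subst h0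
      simp [hAdef, hBdef, hpdef, hqdef]
    · have HC : (((k:ℝ)^3 : ℝ) : ℂ) * (c k * (starRingEnd ℂ) (c k))
          + ((a * (k:ℝ) * ((k:ℝ)+1) : ℝ) : ℂ) * (c (k+1) * (starRingEnd ℂ) (c k))
          - ((a * (k:ℝ) * ((k:ℝ)-1) : ℝ) : ℂ) * (c (k-1) * (starRingEnd ℂ) (c k))
          = ((E * (k:ℝ) : ℝ) : ℂ) * (c k * (starRingEnd ℂ) (c k)) := by
        have h := hrec k h1
        linear_combination (norm := (push_cast; ring_nf)) ((k:ℂ) * (starRingEnd ℂ) (c k)) * h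
      have hre := congrArg Complex.re HC
      simp only [Complex.add_re, Complex.sub_re, Complex.re_ofReal_mul] at hre
      have hdiag : (c k * (starRingEnd ℂ) (c k)).re = f k ^ 2 := by
        rw [Complex.mul_conj, Complex.ofReal_re, Complex.normSq_eq_norm_sq]
      rw [hdiag] at hre
      simp only [hAdef, hBdef, hpdef, hqdef]
      linarith [hre]
  -- sum it up
  have hsum : ∑' k, A k + ∑' k, p k - ∑' k, q k = E * ∑' k, B k := by
    calc ∑' k, A k + ∑' k, p k - ∑' k, q k
        = ∑' k, (A k + p k) - ∑' k, q k := by rw [← Summable.tsum_add hA hp]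
      _ = ∑' k, (A k + p k - q k) := by rw [← Summable.tsum_sub (hA.add hp) hq]
      _ = ∑' k, E * B k := tsum_congr hid
      _ = E * ∑' k, B k := tsum_mul_left
  have hAB : ∑' k, A k = E * ∑' k, B k := by
    rw [← hsum, hqp]; ring
  have hBleA : ∑' k, B k ≤ ∑' k, A k := by
    apply Summable.tsum_le_tsum _ hB hA
    intro k
    simp only [hAdef, hBdef]
    rcases Nat.eq_zero_or_pos k with h0 | h1
    · subst h0; simp
    · have hk1 : (1:ℝ) ≤ (k:ℝ) := by exact_mod_cast h1
      have h2 : (1:ℝ) ≤ (k:ℝ)^2 := by nlinarith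
      have h3 : (k:ℝ) ≤ (k:ℝ)^3 := by nlinarith
      exact mul_le_mul_of_nonneg_right h3 (sq_nonneg (f k))
  have hBpos : 0 < ∑' k, B k := by
    obtain ⟨k, hk⟩ := Function.ne_iff.1 hne
    have hk0 : k ≠ 0 := by
      intro h0; subst h0; exact hk (by simpa using hc0)
    apply Summable.tsum_pos hB (fun i => by simp only [hBdef]; positivity) k
    simp only [hBdef]
    have : 0 < f k := by simpa [hfdef] using norm_pos_iff.2 hk
    have : (0:ℝ) < (k:ℝ) := by exact_mod_cast Nat.pos_of_ne_zero hk0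
    positivity
  nlinarith [hAB, hBleA, hBpos]
end

section
/- Let a ∈ ℝ and E ∈ ℝ, and let w : ℝ → ℂ be a smooth 2π-periodic odd function, not identically zero, satisfying the Ince equation −w''(τ) − 2a sin(τ)·w'(τ) = E·w(τ) for all τ ∈ ℝ. Then E ≥ 1. -/
open Real
open Filter Set


lemma sq_div_sin_tendsto {f : ℝ → ℝ} {d c : ℝ} (hf : HasDerivAt f d c) (h0 : f c = 0)
    (hs : Real.sin c = 0) (hc : Real.cos c ≠ 0) :
    Tendsto (fun τ => f τ^2 / Real.sin τ) (nhdsWithin c {c}ᶜ) (nhds 0) := by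
  have hslf : Tendsto (slope f c) (nhdsWithin c {c}ᶜ) (nhds d) :=
    hasDerivAt_iff_tendsto_slope.mp hf
  have hsls : Tendsto (slope Real.sin c) (nhdsWithin c {c}ᶜ) (nhds (Real.cos c)) :=
    hasDerivAt_iff_tendsto_slope.mp (Real.hasDerivAt_sin c)
  have hid : Tendsto (fun τ => id τ - c) (nhdsWithin c {c}ᶜ) (nhds 0) := by
    have : Tendsto (fun τ : ℝ => τ - c) (nhds c) (nhds (c - c)) :=
      (continuous_id.sub continuous_const).tendsto c
    simpa using this.mono_left nhdsWithin_le_nhds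
  have key : Tendsto (fun τ => (slope f c τ)^2 * (τ - c) / slope Real.sin c τ)
      (nhdsWithin c {c}ᶜ) (nhds (d^2 * 0 / Real.cos c)) :=
    (((hslf.pow 2).mul hid)).div hsls hc
  rw [show d^2 * 0 / Real.cos c = 0 by ring] at key
  refine key.congr' ?_
  filter_upwards [self_mem_nhdsWithin] with τ (hτ : τ ≠ c)
  have ht : τ - c ≠ 0 := sub_ne_zero.mpr hτ
  rw [slope_def_field, slope_def_field, h0, hs, sub_zero, sub_zero]
  rcases eq_or_ne (Real.sin τ) 0 with h | h
  · rw [h]; simp [ht]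
  · field_simp

noncomputable def irho (a τ : ℝ) : ℝ := Real.exp (-(2*a)*Real.cos τ)
noncomputable def iphi (a τ : ℝ) : ℝ := Real.cos τ / Real.sin τ - (2*a/3)*Real.sin τ
noncomputable def iG (w : ℝ → ℂ) (τ : ℝ) : ℝ :=
  (deriv w τ).re * (w τ).re + (deriv w τ).im * (w τ).im
noncomputable def iN (w : ℝ → ℂ) (τ : ℝ) : ℝ := (w τ).re^2 + (w τ).im^2
noncomputable def iH (a : ℝ) (w : ℝ → ℂ) (τ : ℝ) : ℝ :=
  irho a τ * (iG w τ - iphi a τ * iN w τ)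

lemma hasDerivAt_irho (a τ : ℝ) : HasDerivAt (irho a) (irho a τ * (2*a*Real.sin τ)) τ := by
  have h1 : HasDerivAt (fun τ => -(2*a)*Real.cos τ) (-(2*a) * -Real.sin τ) τ :=
    (Real.hasDerivAt_cos τ).const_mul (-(2*a))
  have := h1.exp
  unfold irho
  convert this using 1
  ring

lemma hasDerivAt_iphi (a τ : ℝ) (hs : Real.sin τ ≠ 0) :
    HasDerivAt (iphi a)
      (-(iphi a τ)^2 - 2*a*Real.sin τ*(iphi a τ) - 1 - (8/9)*a^2*Real.sin τ^2) τ := by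
  have h1 : HasDerivAt (fun τ => Real.cos τ / Real.sin τ)
      ((-Real.sin τ * Real.sin τ - Real.cos τ * Real.cos τ)/(Real.sin τ)^2) τ :=
    (Real.hasDerivAt_cos τ).div (Real.hasDerivAt_sin τ) hs
  have h2 : HasDerivAt (fun τ => (2*a/3)*Real.sin τ) ((2*a/3)*Real.cos τ) τ :=
    (Real.hasDerivAt_sin τ).const_mul (2*a/3)
  have h3 := h1.sub h2
  unfold iphi
  refine h3.congr_deriv ?_
  field_simp
  ring_nf

lemma hasDerivAt_iH (a E : ℝ) (w : ℝ → ℂ) (hw : ContDiff ℝ (⊤ : ℕ∞) w)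
    (hsol : ∀ τ : ℝ, -(deriv (deriv w) τ) - 2 * (a : ℂ) * (Real.sin τ : ℂ) * deriv w τ
      = (E : ℂ) * w τ) (τ : ℝ) (hs : Real.sin τ ≠ 0) :
    HasDerivAt (iH a w)
      (irho a τ * (((deriv w τ).re - iphi a τ * (w τ).re)^2
        + ((deriv w τ).im - iphi a τ * (w τ).im)^2
        + iN w τ * (1 - E + (8/9)*a^2*Real.sin τ^2))) τ := by
  have hdw : Differentiable ℝ w := hw.differentiable (by simp)
  have hwi : ContDiff ℝ (↑(⊤:ℕ∞)) w := hw.of_le (by simp)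
  have hdw' : Differentiable ℝ (deriv w) :=
    (contDiff_infty_iff_deriv.mp hwi).2.differentiable (by simp)
  -- component derivatives
  have hf : HasDerivAt (fun t => (w t).re) ((deriv w τ).re) τ :=
    Complex.reCLM.hasFDerivAt.comp_hasDerivAt τ (hdw τ).hasDerivAt
  have hg : HasDerivAt (fun t => (w t).im) ((deriv w τ).im) τ :=
    Complex.imCLM.hasFDerivAt.comp_hasDerivAt τ (hdw τ).hasDerivAt
  have hf1 : HasDerivAt (fun t => (deriv w t).re) ((deriv (deriv w) τ).re) τ :=
    Complex.reCLM.hasFDerivAt.comp_hasDerivAt τ (hdw' τ).hasDerivAt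
  have hg1 : HasDerivAt (fun t => (deriv w t).im) ((deriv (deriv w) τ).im) τ :=
    Complex.imCLM.hasFDerivAt.comp_hasDerivAt τ (hdw' τ).hasDerivAt
  -- ODE components
  have hode := hsol τ
  have hodeRe : (deriv (deriv w) τ).re
      = -(2*a*Real.sin τ) * (deriv w τ).re - E * (w τ).re := by
    have := congrArg Complex.re hode
    simp [Complex.mul_re, Complex.mul_im, Complex.sin_ofReal_re, Complex.sin_ofReal_im] at this
    linarith
  have hodeIm : (deriv (deriv w) τ).im
      = -(2*a*Real.sin τ) * (deriv w τ).im - E * (w τ).im := by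
    have := congrArg Complex.im hode
    simp [Complex.mul_re, Complex.mul_im, Complex.sin_ofReal_re, Complex.sin_ofReal_im] at this
    linarith
  -- derivative of G
  have hG : HasDerivAt (iG w)
      (((deriv w τ).re^2 + (deriv w τ).im^2) - 2*a*Real.sin τ * iG w τ - E * iN w τ) τ := by
    have h := (hf1.mul hf).add (hg1.mul hg)
    unfold iG
    refine h.congr_deriv ?_
    rw [hodeRe, hodeIm]
    unfold iN
    ring
  -- derivative of N
  have hN : HasDerivAt (iN w) (2 * iG w τ) τ := by
    have h := ((hf.pow 2).add (hg.pow 2))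
    unfold iN
    refine h.congr_deriv ?_
    unfold iG
    ring
  have hφ := hasDerivAt_iphi a τ hs
  have hH := (hasDerivAt_irho a τ).mul (hG.sub (hφ.mul hN))
  unfold iH
  refine hH.congr_deriv ?_
  unfold iG iN
  simp only [Pi.sub_apply, Pi.mul_apply]
  ring


set_option maxHeartbeats 2000000 in
/-- every real spectral value of the Ince equation with a nonzero
smooth odd `2π`-periodic solution is `≥ 1`. -/
theorem ince_odd_eigenvalue_ge_one
    (a E : ℝ) (w : ℝ → ℂ) (hw : ContDiff ℝ (⊤ : ℕ∞) w)
    (hper : Function.Periodic w (2 * π))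
    (hodd : ∀ τ : ℝ, w (-τ) = -w τ)
    (hne : w ≠ 0)
    (hsol : ∀ τ : ℝ, -(deriv (deriv w) τ) - 2 * (a : ℂ) * (Real.sin τ : ℂ) * deriv w τ
      = (E : ℂ) * w τ) :
    1 ≤ E := by
  by_contra hE
  push_neg at hE
  have hdw : Differentiable ℝ w := hw.differentiable (by simp)
  have hwi : ContDiff ℝ (↑(⊤:ℕ∞)) w := hw.of_le (by simp)
  have hdw' : Differentiable ℝ (deriv w) :=
    (contDiff_infty_iff_deriv.mp hwi).2.differentiable (by simp)
  -- endpoint values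
  have hw0 : w 0 = 0 := by
    have h := hodd 0; rw [neg_zero] at h
    have h2 : (2:ℂ) * w 0 = 0 := by linear_combination h
    simpa using h2
  have hwpi : w π = 0 := by
    have h1 : w π = w (-π) := by
      have h := hper (-π); rw [show -π + 2*π = π by ring] at h; exact h
    rw [hodd π] at h1
    have h2 : (2:ℂ) * w π = 0 := by linear_combination h1
    simpa using h2
  -- continuity facts
  have hcρ : Continuous (irho a) :=
    Real.continuous_exp.comp (continuous_const.mul Real.continuous_cos)
  have hcf : Continuous fun t => (w t).re := Complex.continuous_re.comp hdw.continuous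
  have hcg : Continuous fun t => (w t).im := Complex.continuous_im.comp hdw.continuous
  have hcf1 : Continuous fun t => (deriv w t).re := Complex.continuous_re.comp hdw'.continuous
  have hcg1 : Continuous fun t => (deriv w t).im := Complex.continuous_im.comp hdw'.continuous
  have hcG : Continuous (iG w) := (hcf1.mul hcf).add (hcg1.mul hcg)
  have hcN : Continuous (iN w) := (hcf.pow 2).add (hcg.pow 2)
  -- rearranged form of iH, suitable for limits
  have hre : ∀ τ, iH a w τ = irho a τ *
      (iG w τ - (Real.cos τ * (iN w τ / Real.sin τ) - (2*a/3)*Real.sin τ * iN w τ)) := by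
    intro τ; unfold iH iphi; ring
  -- generic endpoint limit
  have hend : ∀ c : ℝ, w c = 0 → Real.sin c = 0 → Real.cos c ≠ 0 →
      Tendsto (iH a w) (nhdsWithin c {c}ᶜ) (nhds 0) := by
    intro c hwc hsc hcc
    have hNdiv : Tendsto (fun τ => iN w τ / Real.sin τ) (nhdsWithin c {c}ᶜ) (nhds 0) := by
      have h1 := sq_div_sin_tendsto (f := fun t => (w t).re)
        (Complex.reCLM.hasFDerivAt.comp_hasDerivAt c (hdw c).hasDerivAt)
        (by simp [hwc]) hsc hcc
      have h2 := sq_div_sin_tendsto (f := fun t => (w t).im)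
        (Complex.imCLM.hasFDerivAt.comp_hasDerivAt c (hdw c).hasDerivAt)
        (by simp [hwc]) hsc hcc
      have h3 := h1.add h2
      rw [add_zero] at h3
      refine h3.congr (fun τ => ?_)
      unfold iN; rw [add_div]
    have hG0 : iG w c = 0 := by unfold iG; rw [hwc]; simp
    have hN0 : iN w c = 0 := by unfold iN; rw [hwc]; simp
    have t1 : Tendsto (irho a) (nhdsWithin c {c}ᶜ) (nhds (irho a c)) :=
      (hcρ.tendsto c).mono_left nhdsWithin_le_nhds
    have t2 : Tendsto (iG w) (nhdsWithin c {c}ᶜ) (nhds 0) := by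
      have := (hcG.tendsto c).mono_left (nhdsWithin_le_nhds (s := {c}ᶜ))
      rwa [hG0] at this
    have t3 : Tendsto (fun τ => Real.cos τ) (nhdsWithin c {c}ᶜ) (nhds (Real.cos c)) :=
      (Real.continuous_cos.tendsto c).mono_left nhdsWithin_le_nhds
    have t4 : Tendsto (fun τ => (2*a/3)*Real.sin τ * iN w τ) (nhdsWithin c {c}ᶜ) (nhds 0) := by
      have : Continuous fun τ => (2*a/3)*Real.sin τ * iN w τ :=
        (continuous_const.mul Real.continuous_sin).mul hcN
      have h := (this.tendsto c).mono_left (nhdsWithin_le_nhds (s := {c}ᶜ))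
      rw [hsc] at h; simpa using h
    have := t1.mul (t2.sub ((t3.mul hNdiv).sub t4))
    simp only [mul_zero, zero_sub, sub_zero, sub_neg_eq_add, zero_add, mul_comm] at this
    have h0 : irho a c * (0 - (Real.cos c * 0 - 0)) = 0 := by ring
    refine Tendsto.congr (fun τ => (hre τ).symm) ?_
    convert t1.mul (t2.sub ((t3.mul hNdiv).sub t4)) using 2
    ring
  have hlim0 : Tendsto (iH a w) (nhdsWithin 0 (Ioi 0)) (nhds 0) :=
    (hend 0 hw0 Real.sin_zero (by rw [Real.cos_zero]; norm_num)).mono_left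
      (nhdsWithin_mono 0 (fun x hx => ne_of_gt hx))
  have hlimπ : Tendsto (iH a w) (nhdsWithin π (Iio π)) (nhds 0) :=
    (hend π hwpi Real.sin_pi (by rw [Real.cos_pi]; norm_num)).mono_left
      (nhdsWithin_mono π (fun x hx => ne_of_lt hx))

  -- derivative facts on Ioo 0 π
  have hsin : ∀ τ ∈ Ioo (0:ℝ) π, Real.sin τ ≠ 0 :=
    fun τ hτ => ne_of_gt (Real.sin_pos_of_pos_of_lt_pi hτ.1 hτ.2)
  set D : ℝ → ℝ := fun τ => irho a τ * (((deriv w τ).re - iphi a τ * (w τ).re)^2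
        + ((deriv w τ).im - iphi a τ * (w τ).im)^2
        + iN w τ * (1 - E + (8/9)*a^2*Real.sin τ^2)) with hD
  have hDer : ∀ τ ∈ Ioo (0:ℝ) π, HasDerivAt (iH a w) (D τ) τ :=
    fun τ hτ => hasDerivAt_iH a E w hw hsol τ (hsin τ hτ)
  have hDnn : ∀ τ, 0 ≤ D τ := by
    intro τ
    have h1 : (0:ℝ) < 1 - E + (8/9)*a^2*Real.sin τ^2 := by nlinarith [sq_nonneg (a*Real.sin τ)]
    have h2 : (0:ℝ) ≤ iN w τ := by unfold iN; positivity
    have h3 := Real.exp_pos (-(2*a)*Real.cos τ)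
    rw [hD]
    have : (0:ℝ) < irho a τ := h3
    nlinarith [sq_nonneg ((deriv w τ).re - iphi a τ * (w τ).re),
      sq_nonneg ((deriv w τ).im - iphi a τ * (w τ).im), mul_nonneg h2 h1.le]
  have hmono : MonotoneOn (iH a w) (Ioo 0 π) := by
    apply monotoneOn_of_deriv_nonneg (convex_Ioo 0 π)
    · exact fun τ hτ => ((hDer τ hτ).differentiableAt.continuousAt).continuousWithinAt
    · rw [interior_Ioo]
      exact fun τ hτ => (hDer τ hτ).differentiableAt.differentiableWithinAt
    · rw [interior_Ioo]
      intro τ hτ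
      rw [(hDer τ hτ).deriv]
      exact hDnn τ
  -- iH vanishes on Ioo 0 π
  have hH0 : ∀ x ∈ Ioo (0:ℝ) π, iH a w x = 0 := by
    intro x hx
    have hub : iH a w x ≤ 0 := by
      refine ge_of_tendsto hlimπ ?_
      filter_upwards [Ioo_mem_nhdsLT_of_mem (show π ∈ Ioc x π from ⟨hx.2, le_refl π⟩)] with y hy
      exact hmono hx ⟨lt_trans hx.1 hy.1, hy.2⟩ hy.1.le
    have hlb : 0 ≤ iH a w x := by
      refine le_of_tendsto hlim0 ?_
      filter_upwards [Ioo_mem_nhdsGT_of_mem (show (0:ℝ) ∈ Ico 0 x from ⟨le_refl 0, hx.1⟩)] with y hy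
      exact hmono ⟨hy.1, lt_trans hy.2 hx.2⟩ hx hy.2.le
    linarith
  -- hence D = 0 on Ioo, hence w = 0 on Ioo
  have hwIoo : ∀ x ∈ Ioo (0:ℝ) π, w x = 0 := by
    intro x hx
    have heq : iH a w =ᶠ[nhds x] fun _ => (0:ℝ) := by
      filter_upwards [Ioo_mem_nhds hx.1 hx.2] with y hy
      exact hH0 y hy
    have hd0 : deriv (iH a w) x = 0 := by
      rw [heq.deriv_eq]; exact deriv_const x 0
    have hdD : deriv (iH a w) x = D x := (hDer x hx).deriv
    have hDx : D x = 0 := by rw [← hdD, hd0]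
    have h1 : (0:ℝ) < 1 - E + (8/9)*a^2*Real.sin x^2 := by nlinarith [sq_nonneg (a*Real.sin x)]
    have h3 : (0:ℝ) < irho a x := Real.exp_pos _
    rw [hD] at hDx
    have hS : ((deriv w x).re - iphi a x * (w x).re)^2
        + ((deriv w x).im - iphi a x * (w x).im)^2
        + iN w x * (1 - E + (8/9)*a^2*Real.sin x^2) = 0 := by
      rcases mul_eq_zero.mp hDx with h | h
      · exact absurd h (ne_of_gt h3)
      · exact h
    have h2 : (0:ℝ) ≤ iN w x := by unfold iN; positivity
    have hN0 : iN w x = 0 := by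
      have hprod : iN w x * (1 - E + (8/9)*a^2*Real.sin x^2) = 0 := by
        nlinarith [sq_nonneg ((deriv w x).re - iphi a x * (w x).re),
          sq_nonneg ((deriv w x).im - iphi a x * (w x).im), mul_nonneg h2 h1.le]
      exact (mul_eq_zero.mp hprod).resolve_right (ne_of_gt h1)
    unfold iN at hN0
    have hre0 : (w x).re = 0 := by nlinarith [sq_nonneg (w x).re, sq_nonneg (w x).im]
    have him0 : (w x).im = 0 := by nlinarith [sq_nonneg (w x).re, sq_nonneg (w x).im]
    apply Complex.ext <;> simp [hre0, him0]
  -- w vanishes on [0, π]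
  have h0pi : ∀ τ ∈ Icc (0:ℝ) π, w τ = 0 := by
    intro τ hτ
    rcases eq_or_lt_of_le hτ.1 with h | h
    · rw [← h]; exact hw0
    · rcases eq_or_lt_of_le hτ.2 with h' | h'
      · rw [h']; exact hwpi
      · exact hwIoo τ ⟨h, h'⟩
  -- w vanishes on [-π, π]
  have hIcc : ∀ τ ∈ Icc (-π) π, w τ = 0 := by
    intro τ hτ
    rcases le_or_gt 0 τ with h | h
    · exact h0pi τ ⟨h, hτ.2⟩
    · have h1 : w τ = -w (-τ) := by
        have := hodd (-τ); rw [neg_neg] at this; exact this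
      rw [h1, h0pi (-τ) ⟨le_of_lt (neg_pos.mpr h), neg_le.mp hτ.1⟩, neg_zero]
  -- w vanishes everywhere
  have hall : ∀ τ : ℝ, w τ = 0 := by
    intro τ
    obtain ⟨y, hy, hxy⟩ := hper.exists_mem_Ico (by positivity) τ (-π)
    rw [show -π + 2*π = π by ring] at hy
    rw [hxy]
    exact hIcc y ⟨hy.1, hy.2.le⟩
  exact hne (funext fun τ => hall τ)
end

section
/- Let a ∈ ℝ. A smooth 2π-periodic function u : ℝ → ℂ satisfies −u''(τ) + (a² sin²(τ) + a cos(τ))·u(τ) = 0 for all τ ∈ ℝ if and only if there exists a constant C ∈ ℂ such that u(τ) = C·exp(−a cos(τ)) for all τ. In particular, the space of smooth 2π-periodic solutions is one-dimensional. -/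
open Real
open scoped ContDiff

private lemma hasDerivAt_cexp_cos (b : ℝ) (τ : ℝ) :
    HasDerivAt (fun t : ℝ => Complex.exp ((b * Real.cos t : ℝ) : ℂ))
      (((-(b * Real.sin τ) : ℝ) : ℂ) * Complex.exp ((b * Real.cos τ : ℝ) : ℂ)) τ := by
  have h1 : HasDerivAt (fun t : ℝ => b * Real.cos t) (b * -Real.sin τ) τ :=
    (Real.hasDerivAt_cos τ).const_mul b
  have h2 := (h1.ofReal_comp).cexp
  convert h2 using 1
  push_cast
  ring

/-- the kernel of the periodic Whittaker–Hill operator: a smooth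
`2π`-periodic function `u` satisfies `−u'' + (a² sin²τ + a cos τ)u = 0` iff
`u = C·exp(−a cos τ)` for some constant `C`. -/
theorem whittaker_hill_kernel
    (a : ℝ) (u : ℝ → ℂ) (hu : ContDiff ℝ (⊤ : ℕ∞) u)
    (hper : Function.Periodic u (2 * π)) :
    (∀ τ : ℝ, -(deriv (deriv u) τ) +
        ((a ^ 2 * Real.sin τ ^ 2 + a * Real.cos τ : ℝ) : ℂ) * u τ = 0) ↔
      ∃ C : ℂ, ∀ τ : ℝ, u τ = C * Complex.exp (-((a * Real.cos τ : ℝ) : ℂ)) := by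
  constructor
  · intro heq
    have huinf : ContDiff ℝ ∞ u := hu.of_le (by simp)
    have hud : Differentiable ℝ u := huinf.differentiable (by simp)
    have hud2 : Differentiable ℝ (deriv u) := by
      have := (ContDiff.iterate_deriv 1 huinf)
      simpa using this.differentiable (by simp)
    set E : ℝ → ℂ := fun t => Complex.exp ((a * Real.cos t : ℝ) : ℂ) with hE
    set f : ℝ → ℂ := fun t => u t * E t with hf
    set F : ℝ → ℂ := fun t => (deriv u t - ((a * Real.sin t : ℝ) : ℂ) * u t) * E t with hFdef
    have hf' : ∀ τ : ℝ, HasDerivAt f (F τ) τ := by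
      intro τ
      have h1 : HasDerivAt u (deriv u τ) τ := (hud τ).hasDerivAt
      have h2 := h1.mul (hasDerivAt_cexp_cos a τ)
      refine h2.congr_deriv ?_
      simp only [hFdef, hE]
      push_cast
      ring
    have hF' : ∀ τ : ℝ, HasDerivAt F (((-(2 * a * Real.sin τ) : ℝ) : ℂ) * F τ) τ := by
      intro τ
      have h1 : HasDerivAt (deriv u) (deriv (deriv u) τ) τ := (hud2 τ).hasDerivAt
      have hsin : HasDerivAt (fun t : ℝ => ((a * Real.sin t : ℝ) : ℂ))
          (((a * Real.cos τ : ℝ) : ℂ)) τ := by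
        exact ((Real.hasDerivAt_sin τ).const_mul a).ofReal_comp
      have h2 := hsin.mul ((hud τ).hasDerivAt)
      have h3 := (h1.sub h2).mul (hasDerivAt_cexp_cos a τ)
      have hupp : deriv (deriv u) τ =
          ((a ^ 2 * Real.sin τ ^ 2 + a * Real.cos τ : ℝ) : ℂ) * u τ := by
        have := heq τ; linear_combination -this
      refine h3.congr_deriv ?_
      rw [hupp]
      simp only [hFdef, hE, Pi.sub_apply, Pi.mul_apply]
      push_cast
      ring
    set D : ℝ → ℂ := fun t => Complex.exp ((-(2 * a) * Real.cos t : ℝ) : ℂ) with hD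
    have hg' : ∀ τ : ℝ, HasDerivAt (fun t => F t * D t) 0 τ := by
      intro τ
      have := (hF' τ).mul (hasDerivAt_cexp_cos (-(2 * a)) τ)
      refine this.congr_deriv ?_
      push_cast
      ring
    have hgconst : ∀ τ : ℝ, F τ * D τ = F 0 * D 0 := by
      intro τ
      exact is_const_of_deriv_eq_zero (fun x => (hg' x).differentiableAt)
        (fun x => (hg' x).deriv) τ 0
    set K : ℂ := F 0 * D 0 with hK
    have hFK : ∀ τ : ℝ, F τ = K * Complex.exp ((2 * a * Real.cos τ : ℝ) : ℂ) := by
      intro τ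
      have h := hgconst τ
      have hDinv : D τ * Complex.exp ((2 * a * Real.cos τ : ℝ) : ℂ) = 1 := by
        rw [hD, ← Complex.exp_add, ← Complex.exp_zero]
        congr 1
        push_cast
        ring
      calc F τ = F τ * (D τ * Complex.exp ((2 * a * Real.cos τ : ℝ) : ℂ)) := by
              rw [hDinv, mul_one]
        _ = (F τ * D τ) * Complex.exp ((2 * a * Real.cos τ : ℝ) : ℂ) := by ring
        _ = K * Complex.exp ((2 * a * Real.cos τ : ℝ) : ℂ) := by rw [h]
    have hFeq : F = fun t => K * Complex.exp ((2 * a * Real.cos t : ℝ) : ℂ) := funext hFK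
    have hcont : Continuous fun t : ℝ => K * Complex.exp ((2 * a * Real.cos t : ℝ) : ℂ) := by
      fun_prop
    have hint : ∫ t in (0:ℝ)..(2 * π), F t = f (2 * π) - f 0 :=
      intervalIntegral.integral_eq_sub_of_hasDerivAt (fun x _ => hf' x)
        (by rw [hFeq]; exact hcont.intervalIntegrable _ _)
    have hfper : f (2 * π) = f 0 := by
      simp only [hf, hE]
      have h1 : u (2 * π) = u 0 := by simpa using hper 0
      rw [h1, Real.cos_two_pi, Real.cos_zero]
    have hIc : ∫ t in (0:ℝ)..(2 * π), Complex.exp ((2 * a * Real.cos t : ℝ) : ℂ)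
        = ((∫ t in (0:ℝ)..(2 * π), Real.exp (2 * a * Real.cos t) : ℝ) : ℂ) := by
      rw [← intervalIntegral.integral_ofReal]
      congr 1
      funext t
      rw [Complex.ofReal_exp]
    have hIpos : 0 < ∫ t in (0:ℝ)..(2 * π), Real.exp (2 * a * Real.cos t) := by
      apply intervalIntegral.intervalIntegral_pos_of_pos
      · exact (by fun_prop : Continuous fun t : ℝ => Real.exp (2 * a * Real.cos t)).intervalIntegrable _ _
      · exact fun x => Real.exp_pos _
      · positivity
    have hK0 : K = 0 := by
      have h1 : K * ((∫ t in (0:ℝ)..(2 * π), Real.exp (2 * a * Real.cos t) : ℝ) : ℂ) = 0 := by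
        rw [← hIc, ← intervalIntegral.integral_const_mul]
        have : (fun t => K * Complex.exp ((2 * a * Real.cos t : ℝ) : ℂ)) = F := hFeq.symm
        rw [show (∫ t in (0:ℝ)..(2 * π), K * Complex.exp ((2 * a * Real.cos t : ℝ) : ℂ))
            = ∫ t in (0:ℝ)..(2 * π), F t by rw [hFeq]]
        rw [hint, hfper, sub_self]
      rcases mul_eq_zero.mp h1 with h | h
      · exact h
      · exfalso
        exact hIpos.ne' (by exact_mod_cast h)
    have hF0 : ∀ τ : ℝ, F τ = 0 := by
      intro τ; rw [hFK τ, hK0, zero_mul]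
    have hfconst : ∀ τ : ℝ, f τ = f 0 := by
      intro τ
      exact is_const_of_deriv_eq_zero (fun x => (hf' x).differentiableAt)
        (fun x => by rw [(hf' x).deriv, hF0]) τ 0
    refine ⟨f 0, fun τ => ?_⟩
    have h1 : f τ = f 0 := hfconst τ
    have h2 : Complex.exp ((a * Real.cos τ : ℝ) : ℂ) *
        Complex.exp (-((a * Real.cos τ : ℝ) : ℂ)) = 1 := by
      rw [← Complex.exp_add, add_neg_cancel, Complex.exp_zero]
    calc u τ = u τ * (Complex.exp ((a * Real.cos τ : ℝ) : ℂ) *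
          Complex.exp (-((a * Real.cos τ : ℝ) : ℂ))) := by rw [h2, mul_one]
      _ = f τ * Complex.exp (-((a * Real.cos τ : ℝ) : ℂ)) := by
          simp only [hf, hE]; ring
      _ = f 0 * Complex.exp (-((a * Real.cos τ : ℝ) : ℂ)) := by rw [h1]
  · rintro ⟨C, hC⟩ τ
    have hrw : (fun t : ℝ => Complex.exp (-((a * Real.cos t : ℝ) : ℂ)))
        = fun t : ℝ => Complex.exp ((-a * Real.cos t : ℝ) : ℂ) := by
      funext t; congr 1; push_cast; ring
    have hufun : u = fun t : ℝ => C * Complex.exp ((-a * Real.cos t : ℝ) : ℂ) := by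
      funext t; rw [hC t]; rw [show Complex.exp (-((a * Real.cos t : ℝ) : ℂ))
        = Complex.exp ((-a * Real.cos t : ℝ) : ℂ) from congrFun hrw t]
    have hd1 : ∀ t : ℝ, HasDerivAt (fun t : ℝ => C * Complex.exp ((-a * Real.cos t : ℝ) : ℂ))
        (C * (((a * Real.sin t : ℝ) : ℂ) * Complex.exp ((-a * Real.cos t : ℝ) : ℂ))) t := by
      intro t
      have := (hasDerivAt_cexp_cos (-a) t).const_mul C
      refine this.congr_deriv ?_
      push_cast; ring
    have hderiv1 : deriv u = fun t : ℝ =>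
        C * (((a * Real.sin t : ℝ) : ℂ) * Complex.exp ((-a * Real.cos t : ℝ) : ℂ)) := by
      funext t
      rw [hufun]
      exact (hd1 t).deriv
    have hsin : ∀ t : ℝ, HasDerivAt (fun s : ℝ => ((a * Real.sin s : ℝ) : ℂ))
        (((a * Real.cos t : ℝ) : ℂ)) t := by
      intro t
      exact ((Real.hasDerivAt_sin t).const_mul a).ofReal_comp
    have hd2 : HasDerivAt (fun t : ℝ =>
        C * (((a * Real.sin t : ℝ) : ℂ) * Complex.exp ((-a * Real.cos t : ℝ) : ℂ)))
        (C * ((((a * Real.cos τ : ℝ) : ℂ) * Complex.exp ((-a * Real.cos τ : ℝ) : ℂ))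
          + ((a * Real.sin τ : ℝ) : ℂ) * (((a * Real.sin τ : ℝ) : ℂ)
            * Complex.exp ((-a * Real.cos τ : ℝ) : ℂ)))) τ := by
      have h := ((hsin τ).mul (hasDerivAt_cexp_cos (-a) τ)).const_mul C
      refine h.congr_deriv ?_
      push_cast; ring
    have hderiv2 : deriv (deriv u) τ =
        C * ((((a * Real.cos τ : ℝ) : ℂ) * Complex.exp ((-a * Real.cos τ : ℝ) : ℂ))
          + ((a * Real.sin τ : ℝ) : ℂ) * (((a * Real.sin τ : ℝ) : ℂ)
            * Complex.exp ((-a * Real.cos τ : ℝ) : ℂ))) := by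
      rw [hderiv1]
      exact hd2.deriv
    rw [hderiv2, hufun]
    push_cast
    ring
end
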